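/- arXiv:2108.11192 — 6 statements merged into one kernel-verified Lean document; each statement's English description precedes it below -/
import Mathlib

section
/- For every function g in H^1(ℝ^d) (d ≥ 2) and all radii 0 ≤ R₁ ≤ R₂, the integral of g² over the annulus {x : R₁ ≤ |x| ≤ R₂} is at most 2(R₂ − R₁) times the product of the L² norm of g and the L² norm of ∇g. -/
/-!
Along a ray `r ↦ g (r • ω)` both `g²` and its derivative are integrable, so `g²` vanishes at
infinity and `g (r • ω)² = -2 ∫_r^∞ g ∂ᵣg ≤ 2 ∫_r^∞ |g| |∇g|`. Since the polar weight `s ^ (d - 1)`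
is increasing, `r ^ (d - 1) g (r • ω)²` is bounded by twice the full weighted radial integral of
`|g| |∇g|`, uniformly in `r`. Integrating this over `r ∈ [R₁, R₂]` and over directions in polar
coordinates gives `∫_annulus g² ≤ 2 (R₂ - R₁) ∫ |g| |∇g|`, and Cauchy–Schwarz finishes.
-/

open MeasureTheory Metric Set Filter Topology
open scoped ENNReal

lemma sq_eq_neg_two_mul_integral_Ioi {u u' : ℝ → ℝ} {r : ℝ}
    (hu : ∀ s ∈ Ici r, HasDerivAt u (u' s) s)
    (hu2 : IntegrableOn (fun s => u s ^ 2) (Ioi r))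
    (huu' : IntegrableOn (fun s => u s * u' s) (Ioi r)) :
    u r ^ 2 = -2 * ∫ s in Ioi r, u s * u' s := by
  have hsq : ∀ s ∈ Ici r, HasDerivAt (fun s => u s ^ 2) (2 * (u s * u' s)) s := fun s hs => by
    simpa [mul_comm, mul_left_comm, mul_assoc] using (hu s hs).fun_pow 2
  have hlim : Tendsto (fun s => u s ^ 2) atTop (𝓝 0) :=
    tendsto_zero_of_hasDerivAt_of_integrableOn_Ioi (fun s hs => hsq s (mem_Ici_of_Ioi hs))
      (huu'.const_mul 2) hu2
  have hftc := integral_Ioi_of_hasDerivAt_of_tendsto' hsq (huu'.const_mul 2) hlim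
  rw [integral_const_mul] at hftc
  linarith

lemma integrableOn_Ioi_of_pow_mul {f : ℝ → ℝ} (n : ℕ) {r : ℝ} (hr : 0 < r)
    (hf : AEStronglyMeasurable f (volume.restrict (Ioi r)))
    (h : IntegrableOn (fun s => s ^ n * f s) (Ioi 0)) : IntegrableOn f (Ioi r) := by
  refine ((h.mono_set (Ioi_subset_Ioi hr.le)).norm.const_mul (r ^ n)⁻¹).mono' hf ?_
  filter_upwards [ae_restrict_mem measurableSet_Ioi] with s hs
  rw [le_inv_mul_iff₀ (pow_pos hr n), norm_mul,
    Real.norm_of_nonneg (pow_nonneg (hr.trans hs).le n)]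
  exact mul_le_mul_of_nonneg_right (pow_le_pow_left₀ hr.le hs.le n) (norm_nonneg _)

lemma pow_mul_sq_le_two_mul_integral_Ioi {u v : ℝ → ℝ} (n : ℕ) {r : ℝ} (hr : 0 < r)
    (hu : Differentiable ℝ u) (hv : Measurable v) (hu' : ∀ s, |deriv u s| ≤ v s)
    (hu2 : IntegrableOn (fun s => s ^ n * u s ^ 2) (Ioi 0))
    (huv : IntegrableOn (fun s => s ^ n * (|u s| * v s)) (Ioi 0)) :
    r ^ n * u r ^ 2 ≤ 2 * ∫ s in Ioi 0, s ^ n * (|u s| * v s) := by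
  have hum : Measurable u := hu.continuous.measurable
  have huv0 : ∀ s, 0 ≤ |u s| * v s :=
    fun s => mul_nonneg (abs_nonneg _) ((abs_nonneg _).trans (hu' s))
  have huv_r : IntegrableOn (fun s => |u s| * v s) (Ioi r) :=
    integrableOn_Ioi_of_pow_mul n hr (hum.abs.mul hv).aestronglyMeasurable huv
  have huu'_r : IntegrableOn (fun s => u s * deriv u s) (Ioi r) := by
    refine huv_r.mono' (hum.mul (measurable_deriv u)).aestronglyMeasurable
      (ae_of_all _ fun s => ?_)
    rw [norm_mul, Real.norm_eq_abs, Real.norm_eq_abs]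
    exact mul_le_mul_of_nonneg_left (hu' s) (abs_nonneg _)
  have hsq : u r ^ 2 ≤ 2 * ∫ s in Ioi r, |u s| * v s := by
    rw [sq_eq_neg_two_mul_integral_Ioi (fun s _ => (hu s).hasDerivAt)
      (integrableOn_Ioi_of_pow_mul n hr (hum.pow_const 2).aestronglyMeasurable hu2) huu'_r]
    have hneg : -∫ s in Ioi r, u s * deriv u s ≤ ∫ s in Ioi r, |u s| * v s :=
      (neg_le_abs _).trans <| abs_integral_le_integral_abs.trans <|
        setIntegral_mono huu'_r.abs huv_r fun s => by
          rw [abs_mul]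
          exact mul_le_mul_of_nonneg_left (hu' s) (abs_nonneg _)
    linarith
  calc r ^ n * u r ^ 2 ≤ 2 * ∫ s in Ioi r, r ^ n * (|u s| * v s) := by
        rw [integral_const_mul]
        nlinarith [pow_pos hr n]
    _ ≤ 2 * ∫ s in Ioi r, s ^ n * (|u s| * v s) := by
        refine mul_le_mul_of_nonneg_left ?_ zero_le_two
        refine setIntegral_mono_on (huv_r.const_mul _) (huv.mono_set (Ioi_subset_Ioi hr.le))
          measurableSet_Ioi fun s hs => ?_
        exact mul_le_mul_of_nonneg_right (pow_le_pow_left₀ hr.le (le_of_lt hs) n) (huv0 s)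
    _ ≤ 2 * ∫ s in Ioi 0, s ^ n * (|u s| * v s) := by
        refine mul_le_mul_of_nonneg_left ?_ zero_le_two
        refine setIntegral_mono_set huv ?_ (Ioi_subset_Ioi hr.le).eventuallyLE
        filter_upwards [ae_restrict_mem measurableSet_Ioi] with s hs
        exact mul_nonneg (pow_nonneg (le_of_lt hs) n) (huv0 s)

lemma lintegral_Ioi_pow_mul_indicator_Icc_sq_le {u v : ℝ → ℝ} (n : ℕ) (R₁ R₂ : ℝ)
    (hu : Differentiable ℝ u) (hv : Measurable v) (hu' : ∀ s, |deriv u s| ≤ v s)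
    (hu2 : ∫⁻ s in Ioi 0, ENNReal.ofReal (s ^ n * u s ^ 2) ≠ ∞)
    (huv : ∫⁻ s in Ioi 0, ENNReal.ofReal (s ^ n * (|u s| * v s)) ≠ ∞) :
    ∫⁻ s in Ioi 0, ENNReal.ofReal (s ^ n * (Icc R₁ R₂).indicator (fun s => u s ^ 2) s) ≤
      ENNReal.ofReal (2 * (R₂ - R₁)) *
        ∫⁻ s in Ioi 0, ENNReal.ofReal (s ^ n * (|u s| * v s)) := by
  have hum : Measurable u := hu.continuous.measurable
  have hweight : ∀ {f : ℝ → ℝ}, (∀ s, 0 ≤ f s) →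
      0 ≤ᵐ[volume.restrict (Ioi 0)] fun s => s ^ n * f s := fun hf =>
    (ae_restrict_mem measurableSet_Ioi).mono fun s hs =>
      mul_nonneg (pow_nonneg (le_of_lt hs) n) (hf s)
  have huv0 : ∀ s, 0 ≤ |u s| * v s :=
    fun s => mul_nonneg (abs_nonneg _) ((abs_nonneg _).trans (hu' s))
  have hI2 : IntegrableOn (fun s => s ^ n * u s ^ 2) (Ioi 0) :=
    (lintegral_ofReal_ne_top_iff_integrable
      ((measurable_id.pow_const n).mul (hum.pow_const 2)).aestronglyMeasurable
      (hweight fun s => sq_nonneg (u s))).1 hu2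
  have hI1 : IntegrableOn (fun s => s ^ n * (|u s| * v s)) (Ioi 0) :=
    (lintegral_ofReal_ne_top_iff_integrable
      ((measurable_id.pow_const n).mul (hum.abs.mul hv)).aestronglyMeasurable
      (hweight huv0)).1 huv
  set C := ∫ s in Ioi 0, s ^ n * (|u s| * v s)
  have hC : 0 ≤ C := setIntegral_nonneg measurableSet_Ioi fun s hs =>
    mul_nonneg (pow_nonneg (le_of_lt hs) n) (huv0 s)
  rw [← ofReal_integral_eq_lintegral_ofReal hI1 (hweight huv0)]
  calc ∫⁻ s in Ioi 0, ENNReal.ofReal (s ^ n * (Icc R₁ R₂).indicator (fun s => u s ^ 2) s)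
      ≤ ∫⁻ s in Ioi 0, (Icc R₁ R₂).indicator (fun _ => ENNReal.ofReal (2 * C)) s := by
        refine setLIntegral_mono' measurableSet_Ioi fun s hs => ?_
        by_cases hsR : s ∈ Icc R₁ R₂
        · rw [indicator_of_mem hsR, indicator_of_mem hsR]
          exact ENNReal.ofReal_le_ofReal
            (pow_mul_sq_le_two_mul_integral_Ioi n hs hu hv hu' hI2 hI1)
        · simp [indicator_of_notMem hsR]
    _ ≤ ∫⁻ s, (Icc R₁ R₂).indicator (fun _ => ENNReal.ofReal (2 * C)) s :=
        setLIntegral_le_lintegral _ _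
    _ = ENNReal.ofReal (2 * (R₂ - R₁)) * ENNReal.ofReal C := by
        rw [lintegral_indicator_const measurableSet_Icc, Real.volume_Icc,
          ← ENNReal.ofReal_mul (by positivity), ← ENNReal.ofReal_mul' hC]
        ring_nf

section PolarCoordinates

variable {E : Type*} [NormedAddCommGroup E] [NormedSpace ℝ E] [MeasurableSpace E] [BorelSpace E]
  [FiniteDimensional ℝ E] [Nontrivial E] (μ : Measure E) [μ.IsAddHaarMeasure]

lemma lintegral_addHaar_eq_lintegral_toSphere {f : E → ℝ≥0∞} (hf : Measurable f) :
    ∫⁻ x, f x ∂μ = ∫⁻ ω : sphere (0:E) 1, ∫⁻ r in Ioi (0:ℝ),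
      ENNReal.ofReal (r ^ (Module.finrank ℝ E - 1)) * f (r • (ω : E)) ∂volume ∂μ.toSphere := by
  have hF : Measurable fun p : sphere (0:E) 1 × Ioi (0:ℝ) => f ((p.2 : ℝ) • (p.1 : E)) :=
    hf.comp (measurable_subtype_coe.comp measurable_snd |>.smul
      (measurable_subtype_coe.comp measurable_fst))
  have hpolar : ∀ x : ({0}ᶜ : Set E), f x =
      f (((homeomorphUnitSphereProd E x).2 : ℝ) • ((homeomorphUnitSphereProd E x).1 : E)) := by
    intro x
    simp only [homeomorphUnitSphereProd_apply_fst_coe, homeomorphUnitSphereProd_apply_snd_coe]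
    rw [smul_inv_smul₀ (norm_ne_zero_iff.2 x.2)]
  conv_lhs => rw [← restrict_compl_singleton (μ := μ) (0 : E), ← lintegral_subtype_comap
      (measurableSet_singleton (0:E)).compl, lintegral_congr hpolar]
  rw [(μ.measurePreserving_homeomorphUnitSphereProd).lintegral_comp hF,
    lintegral_prod _ hF.aemeasurable]
  refine lintegral_congr fun ω => ?_
  rw [Measure.volumeIoiPow]
  refine (lintegral_withDensity_eq_lintegral_mul _
      (measurable_subtype_coe.pow_const _).ennreal_ofReal
      (hf.comp (measurable_subtype_coe.smul_const (ω : E)))).trans ?_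
  exact lintegral_subtype_comap measurableSet_Ioi
    (fun r : ℝ => ENNReal.ofReal (r ^ (Module.finrank ℝ E - 1)) * f (r • (ω : E)))

lemma lintegral_ofReal_addHaar_eq_lintegral_toSphere {φ : E → ℝ} (hφ : Measurable φ) :
    ∫⁻ x, ENNReal.ofReal (φ x) ∂μ = ∫⁻ ω : sphere (0:E) 1, ∫⁻ r in Ioi (0:ℝ),
      ENNReal.ofReal (r ^ (Module.finrank ℝ E - 1) * φ (r • (ω : E))) ∂volume ∂μ.toSphere := by
  rw [lintegral_addHaar_eq_lintegral_toSphere μ hφ.ennreal_ofReal]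
  refine lintegral_congr fun ω => setLIntegral_congr_fun measurableSet_Ioi fun r hr => ?_
  rw [ENNReal.ofReal_mul (pow_nonneg (le_of_lt hr) _)]

lemma ae_lintegral_Ioi_ofReal_ne_top {φ : E → ℝ} (hφ : Measurable φ)
    (h : ∫⁻ x, ENNReal.ofReal (φ x) ∂μ ≠ ∞) :
    ∀ᵐ ω : sphere (0:E) 1 ∂μ.toSphere, ∫⁻ r in Ioi (0:ℝ),
      ENNReal.ofReal (r ^ (Module.finrank ℝ E - 1) * φ (r • (ω : E))) ∂volume ≠ ∞ := by
  have hm : Measurable fun p : sphere (0:E) 1 × ℝ =>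
      ENNReal.ofReal (p.2 ^ (Module.finrank ℝ E - 1) * φ (p.2 • (p.1 : E))) :=
    ((measurable_snd.pow_const _).mul
      (hφ.comp (measurable_snd.smul (measurable_subtype_coe.comp measurable_fst)))).ennreal_ofReal
  refine (ae_lt_top hm.lintegral_prod_right' ?_).mono fun ω hω => hω.ne
  rwa [← lintegral_ofReal_addHaar_eq_lintegral_toSphere μ hφ]

theorem lintegral_annulus_sq_le {g : E → ℝ} (hg : Differentiable ℝ g)
    (hg2 : ∫⁻ x, ENNReal.ofReal (g x ^ 2) ∂μ ≠ ∞)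
    (hgg' : ∫⁻ x, ENNReal.ofReal (|g x| * ‖fderiv ℝ g x‖) ∂μ ≠ ∞) (R₁ R₂ : ℝ) :
    ∫⁻ x in {x : E | R₁ ≤ ‖x‖ ∧ ‖x‖ ≤ R₂}, ENNReal.ofReal (g x ^ 2) ∂μ ≤
      ENNReal.ofReal (2 * (R₂ - R₁)) * ∫⁻ x, ENNReal.ofReal (|g x| * ‖fderiv ℝ g x‖) ∂μ := by
  set A : Set E := {x | R₁ ≤ ‖x‖ ∧ ‖x‖ ≤ R₂}
  have hA : MeasurableSet A := measurable_norm measurableSet_Icc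
  have hgm : Measurable g := hg.continuous.measurable
  have hgg'm : Measurable fun x => |g x| * ‖fderiv ℝ g x‖ :=
    hgm.abs.mul (measurable_fderiv ℝ g).norm
  have hind : A.indicator (fun x => ENNReal.ofReal (g x ^ 2)) =
      fun x => ENNReal.ofReal (A.indicator (fun x => g x ^ 2) x) :=
    indicator_comp_of_zero ENNReal.ofReal_zero
  rw [← lintegral_indicator hA, hind,
    lintegral_ofReal_addHaar_eq_lintegral_toSphere μ ((hgm.pow_const 2).indicator hA),
    lintegral_ofReal_addHaar_eq_lintegral_toSphere μ hgg'm,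
    ← lintegral_const_mul' _ _ ENNReal.ofReal_ne_top]
  refine lintegral_mono_ae ?_
  filter_upwards [ae_lintegral_Ioi_ofReal_ne_top μ (hgm.pow_const 2) hg2,
    ae_lintegral_Ioi_ofReal_ne_top μ hgg'm hgg'] with ω hω2 hωgg'
  have hω : ‖(ω : E)‖ = 1 := norm_eq_of_mem_sphere ω
  have hderiv : ∀ r : ℝ,
      HasDerivAt (fun r : ℝ => g (r • (ω : E))) (fderiv ℝ g (r • (ω : E)) ω) r := fun r => by
    have hline := (hasDerivAt_id r).smul_const (ω : E)
    rw [one_smul] at hline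
    exact (hg _).hasFDerivAt.comp_hasDerivAt r hline
  have hbound : ∀ r, |deriv (fun r : ℝ => g (r • (ω : E))) r| ≤ ‖fderiv ℝ g (r • (ω : E))‖ :=
    fun r => by
      rw [(hderiv r).deriv, ← Real.norm_eq_abs]
      simpa [hω] using (fderiv ℝ g (r • (ω : E))).le_opNorm ω
  have hslice : ∀ r ∈ Ioi (0:ℝ), A.indicator (fun x => g x ^ 2) (r • (ω : E)) =
      (Icc R₁ R₂).indicator (fun r => g (r • (ω : E)) ^ 2) r := fun r hr => by
    have hnorm : ‖r • (ω : E)‖ = r := by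
      rw [norm_smul, hω, mul_one, Real.norm_of_nonneg (le_of_lt hr)]
    simp [A, indicator, hnorm]
  rw [setLIntegral_congr_fun measurableSet_Ioi fun r hr => by rw [hslice r hr]]
  exact lintegral_Ioi_pow_mul_indicator_Icc_sq_le _ R₁ R₂ (fun r => (hderiv r).differentiableAt)
    ((measurable_fderiv ℝ g).comp (measurable_id.smul_const _)).norm hbound hω2 hωgg'

end PolarCoordinates

lemma integral_mul_le_sqrt_mul_sqrt {α : Type*} [MeasurableSpace α] {μ : Measure α}
    {f h : α → ℝ} (hf0 : 0 ≤ f) (hh0 : 0 ≤ h) (hf : MemLp f 2 μ) (hh : MemLp h 2 μ) :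
    ∫ x, f x * h x ∂μ ≤ √(∫ x, f x ^ 2 ∂μ) * √(∫ x, h x ^ 2 ∂μ) := by
  have := integral_mul_le_Lp_mul_Lq_of_nonneg Real.HolderConjugate.two_two
    (ae_of_all _ hf0) (ae_of_all _ hh0) (by rwa [ENNReal.ofReal_ofNat])
    (by rwa [ENNReal.ofReal_ofNat])
  simpa [Real.sqrt_eq_rpow, Real.rpow_two] using this

theorem stmt_0_general (d : ℕ) (hd : 2 ≤ d) (g : EuclideanSpace ℝ (Fin d) → ℝ)
    (hgdiff : Differentiable ℝ g) (hg2 : MemLp g 2 volume)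
    (hg'2 : MemLp (fun x => ‖fderiv ℝ g x‖) 2 volume)
    (R₁ R₂ : ℝ) (hR₁₂ : R₁ ≤ R₂) :
    ∫ x in {x : EuclideanSpace ℝ (Fin d) | R₁ ≤ ‖x‖ ∧ ‖x‖ ≤ R₂}, (g x) ^ 2 ≤
      2 * (R₂ - R₁) * Real.sqrt (∫ x, (g x) ^ 2) *
        Real.sqrt (∫ x, ‖fderiv ℝ g x‖ ^ 2) := by
  have : Nonempty (Fin d) := ⟨⟨0, by omega⟩⟩
  have hgm : Measurable g := hgdiff.continuous.measurable
  have hg20 : ∀ x, 0 ≤ g x ^ 2 := fun x => sq_nonneg (g x)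
  have hgg'0 : ∀ x, 0 ≤ |g x| * ‖fderiv ℝ g x‖ := fun x => by positivity
  have hgg' : Integrable (fun x => |g x| * ‖fderiv ℝ g x‖) := hg2.abs.integrable_mul hg'2
  have hannulus := lintegral_annulus_sq_le volume hgdiff
    ((lintegral_ofReal_ne_top_iff_integrable (hgm.pow_const 2).aestronglyMeasurable
      (ae_of_all _ hg20)).2 hg2.integrable_sq)
    ((lintegral_ofReal_ne_top_iff_integrable hgg'.1 (ae_of_all _ hgg'0)).2 hgg') R₁ R₂
  calc ∫ x in {x : EuclideanSpace ℝ (Fin d) | R₁ ≤ ‖x‖ ∧ ‖x‖ ≤ R₂}, (g x) ^ 2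
      ≤ 2 * (R₂ - R₁) * ∫ x, |g x| * ‖fderiv ℝ g x‖ := by
        rw [integral_eq_lintegral_of_nonneg_ae (ae_of_all _ hg20)
          (hgm.pow_const 2).aestronglyMeasurable]
        refine ENNReal.toReal_le_of_le_ofReal
          (mul_nonneg (by linarith) (integral_nonneg hgg'0)) ?_
        rwa [ENNReal.ofReal_mul (by linarith),
          ofReal_integral_eq_lintegral_ofReal hgg' (ae_of_all _ hgg'0)]
    _ ≤ 2 * (R₂ - R₁) * (√(∫ x, |g x| ^ 2) * √(∫ x, ‖fderiv ℝ g x‖ ^ 2)) := by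
        gcongr
        exact integral_mul_le_sqrt_mul_sqrt (fun x => abs_nonneg (g x)) (fun x => norm_nonneg _)
          hg2.abs hg'2
    _ = _ := by simp only [sq_abs]; ring

/-- For every `g ∈ H¹(ℝ^d)` (`d ≥ 2`) and radii `0 ≤ R₁ ≤ R₂`, the integral of `g²`
over the annulus `{x : R₁ ≤ |x| ≤ R₂}` is at most `2(R₂ - R₁)‖g‖_{L²}‖∇g‖_{L²}`. -/
theorem stmt_0 (d : ℕ) (hd : 2 ≤ d) (g : EuclideanSpace ℝ (Fin d) → ℝ)
    (hgdiff : Differentiable ℝ g) (hg2 : MemLp g 2 volume)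
    (hg'2 : MemLp (fun x => ‖fderiv ℝ g x‖) 2 volume)
    (R₁ R₂ : ℝ) (hR₁ : 0 ≤ R₁) (hR₁₂ : R₁ ≤ R₂) :
    ∫ x in {x : EuclideanSpace ℝ (Fin d) | R₁ ≤ ‖x‖ ∧ ‖x‖ ≤ R₂}, (g x) ^ 2 ≤
      2 * (R₂ - R₁) * Real.sqrt (∫ x, (g x) ^ 2) *
        Real.sqrt (∫ x, ‖fderiv ℝ g x‖ ^ 2) :=
  stmt_0_general d hd g hgdiff hg2 hg'2 R₁ R₂ hR₁₂
end

section
/- Let B_R ⊂ ℝ^d be the ball of radius R centered at 0 and let ℓ ∈ ℕ. There is a constant C depending only on d and ℓ such that every φ ∈ H¹₀(B_R) satisfies ‖φ‖_{L²(B_R)} ≤ C ‖∇φ‖_{L²(B_R)}^{ℓ/(ℓ+1)} ‖ |y|^ℓ φ ‖_{L²(B_R)}^{1/(ℓ+1)}. -/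
/-!
Integrating `φ ^ 2` by parts against the linear function `⟪v, x⟫` of a unit vector `v` and
applying Cauchy–Schwarz gives Heisenberg's inequality `‖φ‖² ≤ 2 ‖|x| φ‖ ‖∇φ‖`. Hölder's
inequality with exponents `ℓ / (ℓ - 1)` and `ℓ`, taken with respect to the measure `φ² dx`,
interpolates the weight `|x|` between `1` and `|x| ^ ℓ`: `‖|x| φ‖ ^ ℓ ‖φ‖ ≤ ‖φ‖ ^ ℓ ‖|x| ^ ℓ φ‖`.
Together they give `‖φ‖ ^ (ℓ + 1) ≤ 2 ^ ℓ ‖∇φ‖ ^ ℓ ‖|x| ^ ℓ φ‖`, i.e. the claim with `C = 2`.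
-/

open MeasureTheory Metric Set
open scoped RealInnerProductSpace

section Holder

variable {α : Type*} [MeasurableSpace α] {μ : Measure α} {f g : α → ℝ}

theorem integral_rpow_mul_rpow_le (hf0 : 0 ≤ᵐ[μ] f) (hg0 : 0 ≤ᵐ[μ] g)
    (hf : Integrable f μ) (hg : Integrable g μ) {p q : ℝ} (hp : 0 ≤ p) (hq : 0 ≤ q)
    (hpq : p + q = 1) :
    ∫ a, f a ^ p * g a ^ q ∂μ ≤ (∫ a, f a ∂μ) ^ p * (∫ a, g a ∂μ) ^ q := by
  have hofReal : ∀ᵐ a ∂μ, ENNReal.ofReal (f a ^ p * g a ^ q) =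
      ENNReal.ofReal (f a) ^ p * ENNReal.ofReal (g a) ^ q := by
    filter_upwards [hf0, hg0] with a hfa hga
    rw [ENNReal.ofReal_mul (Real.rpow_nonneg hfa p), ENNReal.ofReal_rpow_of_nonneg hfa hp,
      ENNReal.ofReal_rpow_of_nonneg hga hq]
  have hmeas : AEStronglyMeasurable (fun a => f a ^ p * g a ^ q) μ :=
    ((hf.1.aemeasurable.pow_const p).mul (hg.1.aemeasurable.pow_const q)).aestronglyMeasurable
  have hnonneg : 0 ≤ᵐ[μ] fun a => f a ^ p * g a ^ q := by
    filter_upwards [hf0, hg0] with a hfa hga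
    exact mul_nonneg (Real.rpow_nonneg hfa p) (Real.rpow_nonneg hga q)
  rw [integral_eq_lintegral_of_nonneg_ae hnonneg hmeas, integral_eq_lintegral_of_nonneg_ae hf0 hf.1,
    integral_eq_lintegral_of_nonneg_ae hg0 hg.1, lintegral_congr_ae hofReal, ENNReal.toReal_rpow,
    ENNReal.toReal_rpow, ← ENNReal.toReal_mul]
  refine ENNReal.toReal_mono ?_ (ENNReal.lintegral_mul_norm_pow_le hf.1.aemeasurable.ennreal_ofReal
    hg.1.aemeasurable.ennreal_ofReal hp hq hpq)
  exact ENNReal.mul_ne_top (ENNReal.rpow_ne_top_of_nonneg hp hf.lintegral_lt_top.ne)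
    (ENNReal.rpow_ne_top_of_nonneg hq hg.lintegral_lt_top.ne)

theorem integral_sqrt_mul_sqrt_le (hf0 : 0 ≤ᵐ[μ] f) (hg0 : 0 ≤ᵐ[μ] g)
    (hf : Integrable f μ) (hg : Integrable g μ) :
    ∫ a, √(f a) * √(g a) ∂μ ≤ √(∫ a, f a ∂μ) * √(∫ a, g a ∂μ) := by
  simpa only [Real.sqrt_eq_rpow] using
    integral_rpow_mul_rpow_le hf0 hg0 hf hg (by norm_num) (by norm_num) (by norm_num)

theorem integral_mul_pow_mul_integral_le {h : α → ℝ} (hf0 : 0 ≤ f) (hh0 : 0 ≤ h)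
    (hf : Integrable f μ) (n : ℕ) (hfh : Integrable (fun a => f a * h a ^ n) μ) :
    (∫ a, f a * h a ∂μ) ^ n * ∫ a, f a ∂μ ≤ (∫ a, f a ∂μ) ^ n * ∫ a, f a * h a ^ n ∂μ := by
  rcases n.eq_zero_or_pos with rfl | hn
  · simp
  set X := ∫ a, f a ∂μ
  set Y := ∫ a, f a * h a ^ n ∂μ
  have hX : 0 ≤ X := integral_nonneg hf0
  have hY : 0 ≤ Y := integral_nonneg fun a => mul_nonneg (hf0 a) (pow_nonneg (hh0 a) n)
  have hn' : (n : ℝ) ≠ 0 := by positivity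
  have hp : 0 ≤ 1 - (n : ℝ)⁻¹ := sub_nonneg.2 (inv_le_one_of_one_le₀ (by exact_mod_cast hn))
  have hpointwise : ∀ a, f a ^ (1 - (n : ℝ)⁻¹) * (f a * h a ^ n) ^ (n : ℝ)⁻¹ = f a * h a := by
    intro a
    rw [Real.mul_rpow (hf0 a) (pow_nonneg (hh0 a) n), Real.pow_rpow_inv_natCast (hh0 a) hn.ne',
      ← mul_assoc, ← Real.rpow_add' (hf0 a) (by simp), sub_add_cancel, Real.rpow_one]
  have hholder : ∫ a, f a * h a ∂μ ≤ X ^ (1 - (n : ℝ)⁻¹) * Y ^ (n : ℝ)⁻¹ := by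
    simpa only [hpointwise] using integral_rpow_mul_rpow_le (.of_forall hf0)
      (.of_forall fun a => mul_nonneg (hf0 a) (pow_nonneg (hh0 a) n)) hf hfh hp
      (by positivity) (sub_add_cancel _ _)
  calc (∫ a, f a * h a ∂μ) ^ n * X
      ≤ (X ^ (1 - (n : ℝ)⁻¹) * Y ^ (n : ℝ)⁻¹) ^ n * X := by
        gcongr
        exact integral_nonneg fun a => mul_nonneg (hf0 a) (hh0 a)
    _ = X ^ n * Y := by
        rw [mul_pow, ← Real.rpow_mul_natCast hX, ← Real.rpow_mul_natCast hY, inv_mul_cancel₀ hn',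
          Real.rpow_one, mul_right_comm, ← Real.rpow_add_one' hX (by simp [sub_mul, hn']), sub_mul,
          one_mul, inv_mul_cancel₀ hn', sub_add_cancel, Real.rpow_natCast]

end Holder

theorem le_two_mul_rpow_mul_rpow_of_sq_le {a w g m : ℝ} (ℓ : ℕ) (ha : 0 ≤ a) (hg : 0 ≤ g)
    (hm : 0 ≤ m) (hawg : a ^ 2 ≤ 2 * w * g) (hawm : w ^ ℓ * a ≤ a ^ ℓ * m) :
    a ≤ 2 * g ^ ((ℓ : ℝ) / (ℓ + 1)) * m ^ (1 / ((ℓ : ℝ) + 1)) := by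
  have hpow : a ^ (ℓ + 1) ≤ 2 ^ ℓ * g ^ ℓ * m := by
    rcases ha.eq_or_lt with rfl | ha
    · rw [zero_pow (Nat.succ_ne_zero ℓ)]; positivity
    refine le_of_mul_le_mul_left ?_ (pow_pos ha ℓ)
    calc a ^ ℓ * a ^ (ℓ + 1) = (a ^ 2) ^ ℓ * a := by ring
      _ ≤ (2 * w * g) ^ ℓ * a := by gcongr
      _ = 2 ^ ℓ * g ^ ℓ * (w ^ ℓ * a) := by ring
      _ ≤ 2 ^ ℓ * g ^ ℓ * (a ^ ℓ * m) := by gcongr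
      _ = a ^ ℓ * (2 ^ ℓ * g ^ ℓ * m) := by ring
  have hℓ : (0 : ℝ) < ℓ + 1 := by positivity
  calc a ≤ (2 ^ ℓ * g ^ ℓ * m) ^ ((ℓ : ℝ) + 1)⁻¹ := by
        rw [Real.le_rpow_inv_iff_of_pos ha (by positivity) hℓ]
        exact_mod_cast hpow
    _ = 2 ^ ((ℓ : ℝ) / (ℓ + 1)) * g ^ ((ℓ : ℝ) / (ℓ + 1)) * m ^ (1 / ((ℓ : ℝ) + 1)) := by
        rw [Real.mul_rpow (by positivity) hm, Real.mul_rpow (by positivity) (by positivity),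
          ← Real.rpow_natCast, ← Real.rpow_natCast g, ← Real.rpow_mul zero_le_two,
          ← Real.rpow_mul hg, one_div, div_eq_mul_inv]
    _ ≤ 2 * g ^ ((ℓ : ℝ) / (ℓ + 1)) * m ^ (1 / ((ℓ : ℝ) + 1)) := by
        gcongr
        calc (2 : ℝ) ^ ((ℓ : ℝ) / (ℓ + 1)) ≤ 2 ^ (1 : ℝ) :=
              Real.rpow_le_rpow_of_exponent_le one_le_two ((div_le_one hℓ).2 (by linarith))
          _ = 2 := Real.rpow_one 2

theorem sqrt_le_two_mul_sqrt_rpow_mul_sqrt_rpow {A W G M : ℝ} (ℓ : ℕ) (hA : 0 ≤ A) (hW : 0 ≤ W)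
    (hM : 0 ≤ M) (hAWG : A ≤ 2 * √W * √G) (hAWM : W ^ ℓ * A ≤ A ^ ℓ * M) :
    √A ≤ 2 * √G ^ ((ℓ : ℝ) / (ℓ + 1)) * √M ^ (1 / ((ℓ : ℝ) + 1)) := by
  refine le_two_mul_rpow_mul_rpow_of_sq_le (w := √W) ℓ (Real.sqrt_nonneg _) (Real.sqrt_nonneg _)
    (Real.sqrt_nonneg _) (by rwa [Real.sq_sqrt hA]) ?_
  rw [← pow_le_pow_iff_left₀ (by positivity) (by positivity) two_ne_zero, mul_pow, mul_pow,
    ← pow_mul, ← pow_mul, mul_comm ℓ 2, pow_mul, pow_mul, Real.sq_sqrt hA, Real.sq_sqrt hW,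
    Real.sq_sqrt hM]
  exact hAWM

section Haar

variable {E : Type*} [NormedAddCommGroup E] [MeasurableSpace E] [BorelSpace E] (μ : Measure E)
  [μ.IsAddHaarMeasure]

theorem setIntegral_ball_eq_integral [NormedSpace ℝ E] [FiniteDimensional ℝ E] [Nontrivial E]
    {F : Type*} [NormedAddCommGroup F] [NormedSpace ℝ F]
    {f : E → F} {x : E} {r : ℝ} (hf : ∀ y ∉ closedBall x r, f y = 0) :
    ∫ y in ball x r, f y ∂μ = ∫ y, f y ∂μ := by
  refine setIntegral_eq_integral_of_ae_compl_eq_zero ?_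
  filter_upwards [measure_eq_zero_iff_ae_notMem.1 (Measure.addHaar_sphere μ x r)] with y hys hyb
  exact hf y (by rw [← ball_union_sphere]; exact fun h => h.elim hyb hys)

theorem integral_sq_eq_neg_integral_mul_fderiv_mul_inner [InnerProductSpace ℝ E]
    [FiniteDimensional ℝ E] {φ : E → ℝ} (hφ : Differentiable ℝ φ) (hφc : HasCompactSupport φ)
    {v : E} (hv : ‖v‖ = 1)
    (hint : Integrable (fun x => 2 * φ x * fderiv ℝ φ x v * ⟪v, x⟫) μ) :
    ∫ x, φ x ^ 2 ∂μ = -∫ x, 2 * φ x * fderiv ℝ φ x v * ⟪v, x⟫ ∂μ := by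
  have hDsq (x : E) : fderiv ℝ (fun y => φ y ^ 2) x v = 2 * φ x * fderiv ℝ φ x v := by
    rw [((hφ x).hasFDerivAt.pow 2).fderiv]
    simp only [Nat.add_one_sub_one, pow_one, nsmul_eq_mul, Nat.cast_ofNat, smul_apply, smul_eq_mul]
  have hDinner (x : E) : fderiv ℝ (fun y => ⟪v, y⟫) x v = 1 := by
    have hinner : HasFDerivAt (fun y => ⟪v, y⟫) (innerSL ℝ v) x := (innerSL ℝ v).hasFDerivAt
    rw [hinner.fderiv, innerSL_apply_apply, real_inner_self_eq_norm_sq, hv, one_pow]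
  have hsq : Continuous fun x => φ x ^ 2 := hφ.continuous.pow 2
  have hf'g : Integrable (fun x => fderiv ℝ (fun y => φ y ^ 2) x v * ⟪v, x⟫) μ := by
    simpa only [hDsq] using hint
  have hfg' : Integrable (fun x => φ x ^ 2 * fderiv ℝ (fun y => ⟪v, y⟫) x v) μ := by
    simpa only [hDinner, mul_one] using
      hsq.integrable_of_hasCompactSupport (hφc.mono fun x hx h0 => hx (by simp [h0]))
  have hfg : Integrable (fun x => φ x ^ 2 * ⟪v, x⟫) μ :=
    (hsq.mul (continuous_const.inner continuous_id)).integrable_of_hasCompactSupport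
      (hφc.mono fun x hx h0 => hx (by simp [h0]))
  simpa only [hDsq, hDinner, mul_one] using
    integral_mul_fderiv_eq_neg_fderiv_mul_of_integrable hf'g hfg' hfg
      (fun x _ => (hφ x).pow 2) (fun x _ => (innerSL ℝ v).differentiableAt)

theorem heisenberg_uncertainty [InnerProductSpace ℝ E] [FiniteDimensional ℝ E] [Nontrivial E]
    {φ : E → ℝ} (hφ : Differentiable ℝ φ) (hφc : HasCompactSupport φ)
    (hDφ : MemLp (fun x => ‖fderiv ℝ φ x‖) 2 μ) :
    ∫ x, φ x ^ 2 ∂μ ≤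
      2 * √(∫ x, φ x ^ 2 * ‖x‖ ^ 2 ∂μ) * √(∫ x, ‖fderiv ℝ φ x‖ ^ 2 ∂μ) := by
  obtain ⟨v, hv⟩ := exists_norm_eq E zero_le_one
  have hcont := hφ.continuous
  set H : E → ℝ := fun x => |φ x| * ‖x‖ * ‖fderiv ℝ φ x‖
  have hH : Integrable H μ := by
    have hweight : MemLp (fun x => |φ x| * ‖x‖) 2 μ :=
      (hcont.abs.mul continuous_norm).memLp_of_hasCompactSupport
        (hφc.mono fun x hx h0 => hx (by simp [h0]))
    exact hweight.integrable_mul hDφ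
  have hbound (x : E) : ‖2 * φ x * fderiv ℝ φ x v * ⟪v, x⟫‖ ≤ 2 * H x := by
    have hinner : |⟪v, x⟫| ≤ ‖x‖ := by simpa [hv] using abs_real_inner_le_norm v x
    have hderiv : |fderiv ℝ φ x v| ≤ ‖fderiv ℝ φ x‖ := by
      simpa [hv] using (fderiv ℝ φ x).le_opNorm v
    calc ‖2 * φ x * fderiv ℝ φ x v * ⟪v, x⟫‖ = 2 * (|φ x| * |⟪v, x⟫| * |fderiv ℝ φ x v|) := by
          simp only [Real.norm_eq_abs, abs_mul, abs_two]; ring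
      _ ≤ 2 * (|φ x| * ‖x‖ * ‖fderiv ℝ φ x‖) := by gcongr
  have hint : Integrable (fun x => 2 * φ x * fderiv ℝ φ x v * ⟪v, x⟫) μ := by
    refine (hH.const_mul 2).mono' ?_ (.of_forall hbound)
    have := measurable_fderiv_apply_const ℝ φ v
    exact (by fun_prop : Measurable fun x => 2 * φ x * fderiv ℝ φ x v * ⟪v, x⟫).aestronglyMeasurable
  calc ∫ x, φ x ^ 2 ∂μ = -∫ x, 2 * φ x * fderiv ℝ φ x v * ⟪v, x⟫ ∂μ :=
        integral_sq_eq_neg_integral_mul_fderiv_mul_inner μ hφ hφc hv hint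
    _ ≤ ‖∫ x, 2 * φ x * fderiv ℝ φ x v * ⟪v, x⟫ ∂μ‖ := neg_le_abs _
    _ ≤ ∫ x, 2 * H x ∂μ := norm_integral_le_of_norm_le (hH.const_mul 2) (.of_forall hbound)
    _ = 2 * ∫ x, √(φ x ^ 2 * ‖x‖ ^ 2) * √(‖fderiv ℝ φ x‖ ^ 2) ∂μ := by
      rw [integral_const_mul]
      congr 2 with x
      rw [Real.sqrt_mul (sq_nonneg _), Real.sqrt_sq_eq_abs, Real.sqrt_sq (norm_nonneg _),
        Real.sqrt_sq (norm_nonneg _)]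
    _ ≤ 2 * (√(∫ x, φ x ^ 2 * ‖x‖ ^ 2 ∂μ) * √(∫ x, ‖fderiv ℝ φ x‖ ^ 2 ∂μ)) := by
      gcongr
      exact integral_sqrt_mul_sqrt_le (.of_forall fun x => by positivity)
        (.of_forall fun x => by positivity)
        (((hcont.pow 2).mul (continuous_norm.pow 2)).integrable_of_hasCompactSupport
          (hφc.mono fun x hx h0 => hx (by simp [h0])))
        hDφ.integrable_sq
    _ = _ := by ring

end Haar

/-- For every dimension `d ≥ 1` and every `ℓ ∈ ℕ` there is a constant `C` depending
only on `d` and `ℓ` such that for every radius `R > 0` and every `φ ∈ H¹₀(B_R)`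
(represented as a differentiable function supported in the open ball `B_R` with `φ`
and `∇φ` square integrable):
`‖φ‖_{L²(B_R)} ≤ C ‖∇φ‖_{L²(B_R)}^{ℓ/(ℓ+1)} ‖ |y|^ℓ φ ‖_{L²(B_R)}^{1/(ℓ+1)}`. -/
theorem stmt_1 (d : ℕ) (hd : 1 ≤ d) (ℓ : ℕ) :
    ∃ C > (0 : ℝ), ∀ R > (0 : ℝ), ∀ φ : EuclideanSpace ℝ (Fin d) → ℝ,
      Differentiable ℝ φ → Function.support φ ⊆ Metric.ball 0 R →
      MemLp φ 2 volume → MemLp (fun x => ‖fderiv ℝ φ x‖) 2 volume →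
      Real.sqrt (∫ y in Metric.ball (0 : EuclideanSpace ℝ (Fin d)) R, (φ y) ^ 2) ≤
        C * Real.sqrt (∫ y in Metric.ball (0 : EuclideanSpace ℝ (Fin d)) R,
              ‖fderiv ℝ φ y‖ ^ 2) ^ ((ℓ : ℝ) / (ℓ + 1)) *
          Real.sqrt (∫ y in Metric.ball (0 : EuclideanSpace ℝ (Fin d)) R,
              (‖y‖ ^ ℓ * φ y) ^ 2) ^ (1 / ((ℓ : ℝ) + 1)) := by
  have : Nonempty (Fin d) := ⟨⟨0, hd⟩⟩
  refine ⟨2, two_pos, fun R _ φ hφ hsupp _ hDφ => ?_⟩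
  have hφR : tsupport φ ⊆ closedBall 0 R :=
    closure_minimal (hsupp.trans ball_subset_closedBall) isClosed_closedBall
  have hφc : HasCompactSupport φ :=
    (isCompact_closedBall 0 R).of_isClosed_subset (isClosed_tsupport φ) hφR
  have hout (x) (hx : x ∉ closedBall 0 R) : x ∉ tsupport φ := fun h => hx (hφR h)
  rw [setIntegral_ball_eq_integral volume fun x hx => by
      simp [image_eq_zero_of_notMem_tsupport (hout x hx)],
    setIntegral_ball_eq_integral volume fun x hx => by
      simp [fderiv_of_notMem_tsupport ℝ (hout x hx)],
    setIntegral_ball_eq_integral volume fun x hx => by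
      simp [image_eq_zero_of_notMem_tsupport (hout x hx)]]
  have hweight : ∫ x, (‖x‖ ^ ℓ * φ x) ^ 2 =
      ∫ x : EuclideanSpace ℝ (Fin d), φ x ^ 2 * (‖x‖ ^ 2) ^ ℓ :=
    integral_congr_ae (.of_forall fun x => by ring)
  refine sqrt_le_two_mul_sqrt_rpow_mul_sqrt_rpow ℓ (integral_nonneg fun x => by positivity)
    (integral_nonneg fun x => by positivity) (integral_nonneg fun x => by positivity)
    (heisenberg_uncertainty volume hφ hφc hDφ) ?_
  rw [hweight]
  exact integral_mul_pow_mul_integral_le (fun x => sq_nonneg (φ x)) (fun x => sq_nonneg ‖x‖)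
    ((hφ.continuous.pow 2).integrable_of_hasCompactSupport
      (hφc.mono fun x hx h0 => hx (by simp [h0]))) ℓ
    (((hφ.continuous.pow 2).mul ((continuous_norm.pow 2).pow ℓ)).integrable_of_hasCompactSupport
      (hφc.mono fun x hx h0 => hx (by simp [h0])))
end

section
/- Let v : [0,L] → ℝ be C^m (m ≥ 1) with |v'(y)| + |v''(y)| + ⋯ + |v^(m)(y)| > 0 for all y ∈ [0,L]. Then there exist constants C₀, δ₀ > 0 such that for all λ ∈ ℝ and all δ ∈ (0,δ₀), the Lebesgue measure of the set E^m_{λ,δ} = {y ∈ (0,L) : |v(y) − λ| < δ^m} is at most C₀ δ. -/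
/-!
If `|g'| ≥ c` on an interval, then `g'` has constant sign there (Darboux), so `g` is
`c`-expanding. Induction on `k`: if `|F⁽ᵏ⁾| ≥ c`, then `|F⁽ᵏ⁻¹⁾| < cε` only on a window of width
`4ε` around some point; on either side of the window the induction hypothesis applies with `cε`
in place of `c`, so `|{|F| < c εᵏ}| ≤ 4 · 3ᵏ ε`. Near each point of `[0, L]` some derivative
`v⁽ⁱ⁾`, `1 ≤ i ≤ m`, is bounded away from `0`, and compactness of `[0, L]` glues finitely many
such local bounds.
-/

open MeasureTheory Set Filter Topology
open scoped NNReal ENNReal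

theorem ContDiffOn.hasDerivWithinAt_iteratedDerivWithin {𝕜 F : Type*} [NontriviallyNormedField 𝕜]
    [NormedAddCommGroup F] [NormedSpace 𝕜 F] {f : 𝕜 → F} {s : Set 𝕜} {n i : ℕ}
    (hf : ContDiffOn 𝕜 n f s) (hs : UniqueDiffOn 𝕜 s) (hi : i < n) {x : 𝕜} (hx : x ∈ s) :
    HasDerivWithinAt (iteratedDerivWithin i f s) (iteratedDerivWithin (i + 1) f s x) s x := by
  rw [iteratedDerivWithin_succ]
  exact ((hf.differentiableOn_iteratedDerivWithin (mod_cast hi) hs) x hx).hasDerivWithinAt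

theorem IsCompact.exists_measure_inter_le_mul {X ι : Type*} [TopologicalSpace X]
    [MeasurableSpace X] {μ : Measure X} {K : Set X} (hK : IsCompact K) (S : ι → Set X)
    (g : ι → ℝ≥0∞) (hloc : ∀ x ∈ K, ∃ U ∈ 𝓝[K] x, ∃ C : ℝ≥0, ∀ i, μ (S i ∩ U) ≤ C * g i) :
    ∃ C : ℝ≥0, ∀ i, μ (S i ∩ K) ≤ C * g i := by
  refine hK.induction_on ⟨0, fun i => by simp⟩ ?_ ?_ hloc
  · rintro s t hst ⟨C, hC⟩
    exact ⟨C, fun i => (measure_mono (inter_subset_inter_right _ hst)).trans (hC i)⟩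
  · rintro s t ⟨C₁, h₁⟩ ⟨C₂, h₂⟩
    refine ⟨C₁ + C₂, fun i => ?_⟩
    calc μ (S i ∩ (s ∪ t)) ≤ μ (S i ∩ s) + μ (S i ∩ t) := by
          rw [inter_union_distrib_left]; exact measure_union_le _ _
      _ ≤ C₁ * g i + C₂ * g i := add_le_add (h₁ i) (h₂ i)
      _ = ↑(C₁ + C₂) * g i := by push_cast; ring

section Calculus

variable {s : Set ℝ} {g g' : ℝ → ℝ} {c : ℝ}

theorem Convex.forall_le_or_forall_le_neg_of_le_abs_deriv (hs : Convex ℝ s)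
    (hg : ∀ x ∈ s, HasDerivWithinAt g (g' x) s x) (hc : 0 < c) (hg' : ∀ x ∈ s, c ≤ |g' x|) :
    (∀ x ∈ s, c ≤ g' x) ∨ ∀ x ∈ s, g' x ≤ -c := by
  by_contra! h
  obtain ⟨⟨x, hx, hgx⟩, y, hy, hgy⟩ := h
  have hx' : g' x ≤ 0 := by rcases le_abs'.1 (hg' x hx) with h | h <;> linarith
  have hy' : 0 ≤ g' y := by rcases le_abs'.1 (hg' y hy) with h | h <;> linarith
  obtain ⟨z, hz, hz0⟩ : (0 : ℝ) ∈ g' '' s :=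
    (hs.image_hasDerivWithinAt hg).ordConnected.out (mem_image_of_mem g' hx)
      (mem_image_of_mem g' hy) ⟨hx', hy'⟩
  have := hg' z hz
  rw [hz0, abs_zero] at this
  linarith

theorem Convex.mul_sub_le_image_sub_of_le_hasDerivWithinAt (hs : Convex ℝ s)
    (hg : ∀ x ∈ s, HasDerivWithinAt g (g' x) s x) (hg' : ∀ x ∈ s, c ≤ g' x)
    {x y : ℝ} (hx : x ∈ s) (hy : y ∈ s) (hxy : x ≤ y) : c * (y - x) ≤ g y - g x := by
  have hmono : MonotoneOn (fun t => g t - c * t) s :=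
    monotoneOn_of_hasDerivWithinAt_nonneg hs
      (fun t ht => (hg t ht).continuousWithinAt.sub
        (continuousWithinAt_const.mul continuousWithinAt_id))
      (fun t ht => ((hg t (interior_subset ht)).mono interior_subset).sub
        ((hasDerivWithinAt_id t _).const_mul c))
      (fun t ht => by simpa using hg' t (interior_subset ht))
  have := hmono hx hy hxy
  simp only at this
  linarith

theorem Convex.mul_abs_sub_le_abs_image_sub_of_le_abs_deriv (hs : Convex ℝ s)
    (hg : ∀ x ∈ s, HasDerivWithinAt g (g' x) s x) (hc : 0 < c) (hg' : ∀ x ∈ s, c ≤ |g' x|)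
    {x y : ℝ} (hx : x ∈ s) (hy : y ∈ s) : c * |x - y| ≤ |g x - g y| := by
  wlog hpos : ∀ x ∈ s, c ≤ g' x generalizing g g'
  · obtain hpos' | hneg := hs.forall_le_or_forall_le_neg_of_le_abs_deriv hg hc hg'
    · exact absurd hpos' hpos
    have := this (g := -g) (g' := -g') (fun t ht => (hg t ht).neg) (by simpa using hg')
      (fun t ht => by simpa using neg_le_neg (hneg t ht))
    rwa [Pi.neg_apply, Pi.neg_apply, neg_sub_neg, abs_sub_comm (g y)] at this
  wlog hxy : x ≤ y generalizing x y
  · rw [abs_sub_comm, abs_sub_comm (g x)]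
    exact this hy hx (le_of_not_ge hxy)
  have := hs.mul_sub_le_image_sub_of_le_hasDerivWithinAt hg hpos hx hy hxy
  rw [abs_sub_comm, abs_of_nonneg (sub_nonneg.2 hxy), abs_sub_comm]
  exact this.trans (le_abs_self _)

end Calculus

theorem exists_abs_sub_lt_of_abs_lt {s : Set ℝ} {g : ℝ → ℝ} {c : ℝ} (hc : 0 < c)
    (hg : ∀ x ∈ s, ∀ y ∈ s, c * |x - y| ≤ |g x - g y|) (t : ℝ) :
    ∃ y₀, ∀ y ∈ s, |g y| < c * t → |y - y₀| < 2 * t := by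
  by_cases h : ∃ y₀ ∈ s, |g y₀| < c * t
  · obtain ⟨y₀, hy₀, hgy₀⟩ := h
    refine ⟨y₀, fun y hy hgy => lt_of_mul_lt_mul_left ?_ hc.le⟩
    calc c * |y - y₀| ≤ |g y - g y₀| := hg y hy y₀ hy₀
      _ ≤ |g y| + |g y₀| := abs_sub _ _
      _ < c * (2 * t) := by linarith
  · push Not at h
    exact ⟨0, fun y hy hgy => absurd (h y hy) hgy.not_ge⟩

theorem volume_abs_lt_mul_pow_le {F : ℕ → ℝ → ℝ} {k : ℕ} {s : Set ℝ} (hs : Convex ℝ s)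
    (hF : ∀ j < k, ∀ y ∈ s, HasDerivWithinAt (F j) (F (j + 1) y) s y) {c : ℝ} (hc : 0 < c)
    (hFk : ∀ y ∈ s, c ≤ |F k y|) {ε : ℝ} (hε : 0 < ε) :
    volume {y ∈ s | |F 0 y| < c * ε ^ k} ≤ ENNReal.ofReal (4 * 3 ^ k * ε) := by
  induction k generalizing s c with
  | zero =>
    have : {y ∈ s | |F 0 y| < c * ε ^ 0} = ∅ :=
      eq_empty_of_forall_notMem fun y ⟨hy, hlt⟩ => by simpa using (hFk y hy).trans_lt hlt
    rw [this, measure_empty]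
    exact zero_le
  | succ k ih =>
    obtain ⟨y₀, hy₀⟩ := exists_abs_sub_lt_of_abs_lt hc
      (fun x hx y hy => hs.mul_abs_sub_le_abs_image_sub_of_le_abs_deriv
        (hF k k.lt_succ_self) hc hFk hx hy) ε
    have hpiece : ∀ t ⊆ s, Convex ℝ t → (∀ y ∈ t, 2 * ε ≤ |y - y₀|) →
        volume {y ∈ t | |F 0 y| < (c * ε) * ε ^ k} ≤ ENNReal.ofReal (4 * 3 ^ k * ε) :=
      fun t hts ht hfar => ih ht (fun j hj y hy => (hF j (by omega) y (hts hy)).mono hts)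
        (mul_pos hc hε) fun y hy => not_lt.1 fun hlt => (hfar y hy).not_gt (hy₀ y (hts hy) hlt)
    have hcover : {y ∈ s | |F 0 y| < c * ε ^ (k + 1)} ⊆ Ioo (y₀ - 2 * ε) (y₀ + 2 * ε) ∪
        ({y ∈ s ∩ Iic (y₀ - 2 * ε) | |F 0 y| < (c * ε) * ε ^ k} ∪
          {y ∈ s ∩ Ici (y₀ + 2 * ε) | |F 0 y| < (c * ε) * ε ^ k}) := by
      rintro y ⟨hy, hlt⟩
      rw [pow_succ', ← mul_assoc] at hlt
      by_cases hl : y ≤ y₀ - 2 * ε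
      · exact Or.inr (Or.inl ⟨⟨hy, hl⟩, hlt⟩)
      by_cases hr : y₀ + 2 * ε ≤ y
      · exact Or.inr (Or.inr ⟨⟨hy, hr⟩, hlt⟩)
      exact Or.inl ⟨by linarith, by linarith⟩
    have hleft := hpiece (s ∩ Iic (y₀ - 2 * ε)) inter_subset_left (hs.inter (convex_Iic _))
      fun y hy => by rw [abs_sub_comm, abs_of_nonneg] <;> linarith [hy.2.out]
    have hright := hpiece (s ∩ Ici (y₀ + 2 * ε)) inter_subset_left (hs.inter (convex_Ici _))
      fun y hy => by rw [abs_of_nonneg] <;> linarith [hy.2.out]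
    calc volume {y ∈ s | |F 0 y| < c * ε ^ (k + 1)}
        ≤ ENNReal.ofReal (4 * ε) + (ENNReal.ofReal (4 * 3 ^ k * ε) +
            ENNReal.ofReal (4 * 3 ^ k * ε)) := by
          refine (measure_mono hcover).trans ((measure_union_le _ _).trans (add_le_add ?_
            ((measure_union_le _ _).trans (add_le_add hleft hright))))
          rw [Real.volume_Ioo]
          exact ENNReal.ofReal_le_ofReal (by linarith)
      _ ≤ ENNReal.ofReal (4 * 3 ^ (k + 1) * ε) := by
          rw [← ENNReal.ofReal_add (by positivity) (by positivity),
            ← ENNReal.ofReal_add (by positivity) (by positivity)]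
          refine ENNReal.ofReal_le_ofReal ?_
          have : (1 : ℝ) ≤ 3 ^ k := one_le_pow₀ (by norm_num)
          rw [pow_succ]
          nlinarith

theorem exists_nhdsWithin_volume_abs_sub_lt_pow_le {F : ℕ → ℝ → ℝ} {k : ℕ} {s : Set ℝ}
    (hs : Convex ℝ s) (hF : ∀ j < k, ∀ y ∈ s, HasDerivWithinAt (F j) (F (j + 1) y) s y)
    (hk : 0 < k) {y : ℝ} (hcont : ContinuousWithinAt (F k) s y) (hne : F k y ≠ 0) :
    ∃ U ∈ 𝓝[s] y, ∃ C : ℝ≥0, ∀ lam δ : ℝ, 0 < δ →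
      volume ({z | |F 0 z - lam| < δ ^ k} ∩ U) ≤ C * ENNReal.ofReal δ := by
  set c := |F k y| / 2
  have hc : 0 < c := by positivity
  obtain ⟨r, hr, hball⟩ := Metric.mem_nhdsWithin_iff.1
    (hcont.abs.eventually_const_lt (half_lt_self (abs_pos.2 hne)))
  set U := s ∩ Metric.ball y r
  have hUs : U ⊆ s := inter_subset_left
  set M := max 1 c⁻¹
  have hcM : 1 ≤ c * M ^ k := calc
    1 = c * c⁻¹ := (mul_inv_cancel₀ hc.ne').symm
    _ ≤ c * M := by gcongr; exact le_max_right _ _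
    _ ≤ c * M ^ k := by gcongr; exact le_self_pow₀ (le_max_left _ _) hk.ne'
  refine ⟨U, inter_mem_nhdsWithin s (Metric.ball_mem_nhds y hr),
    (4 * 3 ^ k * M).toNNReal, fun lam δ hδ => ?_⟩
  set G := Function.update F 0 (fun z => F 0 z - lam)
  have hG : ∀ j < k, ∀ z ∈ U, HasDerivWithinAt (G j) (G (j + 1) z) U z := by
    intro j hj z hz
    obtain rfl | hj0 := eq_or_ne j 0
    · simpa [G] using ((hF 0 hk z (hUs hz)).mono hUs).sub_const lam
    · simpa [G, hj0] using (hF j hj z (hUs hz)).mono hUs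
  have hGk : ∀ z ∈ U, c ≤ |G k z| := fun z hz => by
    simpa [G, hk.ne'] using (hball ⟨hz.2, hz.1⟩).le
  calc volume ({z | |F 0 z - lam| < δ ^ k} ∩ U)
      ≤ volume {z ∈ U | |G 0 z| < c * (M * δ) ^ k} := by
        refine measure_mono fun z ⟨hz, hzU⟩ => ⟨hzU, ?_⟩
        have : δ ^ k ≤ c * (M * δ) ^ k := by
          rw [mul_pow, ← mul_assoc]
          exact le_mul_of_one_le_left (by positivity) hcM
        simpa [G] using hz.out.trans_le this
    _ ≤ ENNReal.ofReal (4 * 3 ^ k * (M * δ)) :=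
        volume_abs_lt_mul_pow_le (hs.inter (convex_ball y r)) hG hc hGk (by positivity)
    _ = (4 * 3 ^ k * M).toNNReal * ENNReal.ofReal δ := by
        rw [← mul_assoc, ENNReal.ofReal_mul (by positivity)]
        rfl

theorem stmt_4_general (L : ℝ) (hL : 0 < L) (m : ℕ) (v : ℝ → ℝ)
    (hv : ContDiffOn ℝ m v (Set.Icc 0 L))
    (hnondeg : ∀ y ∈ Set.Icc (0 : ℝ) L,
      ∃ i, 1 ≤ i ∧ i ≤ m ∧ iteratedDerivWithin i v (Set.Icc 0 L) y ≠ 0) :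
    ∃ C₀ > (0 : ℝ), ∃ δ₀ > (0 : ℝ), ∀ lam : ℝ, ∀ δ ∈ Set.Ioo (0 : ℝ) δ₀,
      volume {y ∈ Set.Ioo (0 : ℝ) L | |v y - lam| < δ ^ m} ≤ ENNReal.ofReal (C₀ * δ) := by
  set I := Icc (0 : ℝ) L
  have hloc : ∀ y ∈ I, ∃ U ∈ 𝓝[I] y, ∃ C : ℝ≥0, ∀ p : ℝ × Ioo (0 : ℝ) 1,
      volume ({z | |v z - p.1| < (p.2 : ℝ) ^ m} ∩ U) ≤ C * ENNReal.ofReal p.2 := by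
    intro y hy
    obtain ⟨i, hi, him, hne⟩ := hnondeg y hy
    obtain ⟨U, hU, C, hC⟩ := exists_nhdsWithin_volume_abs_sub_lt_pow_le
      (F := fun j => iteratedDerivWithin j v I) (convex_Icc 0 L)
      (fun j hj z hz => hv.hasDerivWithinAt_iteratedDerivWithin (uniqueDiffOn_Icc hL)
        (hj.trans_le him) hz) hi
      (hv.continuousOn_iteratedDerivWithin (mod_cast him) (uniqueDiffOn_Icc hL) y hy) hne
    refine ⟨U, hU, C, fun ⟨lam, δ, hδ⟩ =>
      (measure_mono (inter_subset_inter_left U fun z hz => ?_)).trans (hC lam δ hδ.1)⟩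
    simpa using hz.out.trans_le (pow_le_pow_of_le_one hδ.1.le hδ.2.le him)
  obtain ⟨C, hC⟩ := isCompact_Icc.exists_measure_inter_le_mul _ _ hloc
  refine ⟨C + 1, by positivity, 1, one_pos, fun lam δ hδ => ?_⟩
  calc volume {y ∈ Ioo 0 L | |v y - lam| < δ ^ m}
      ≤ volume ({z | |v z - lam| < δ ^ m} ∩ I) :=
        measure_mono fun z hz => ⟨hz.2, Ioo_subset_Icc_self hz.1⟩
    _ ≤ C * ENNReal.ofReal δ := hC (lam, ⟨δ, hδ⟩)
    _ ≤ ENNReal.ofReal ((C + 1) * δ) := by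
        rw [ENNReal.ofReal_mul (by positivity), ← ENNReal.ofReal_coe_nnreal]
        gcongr
        linarith

/-- Let `v : [0,L] → ℝ` be `C^m` (`m ≥ 1`) with
`|v'(y)| + ⋯ + |v^{(m)}(y)| > 0` on `[0,L]`. Then there are `C₀, δ₀ > 0` such that for
all `λ ∈ ℝ` and `δ ∈ (0,δ₀)`, the measure of the thickened level set
`E^m_{λ,δ} = {y ∈ (0,L) : |v(y) - λ| < δ^m}` is at most `C₀ δ`. -/
theorem stmt_4 (L : ℝ) (hL : 0 < L) (m : ℕ) (hm : 1 ≤ m) (v : ℝ → ℝ)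
    (hv : ContDiffOn ℝ m v (Set.Icc 0 L))
    (hnondeg : ∀ y ∈ Set.Icc (0 : ℝ) L,
      ∃ i, 1 ≤ i ∧ i ≤ m ∧ iteratedDerivWithin i v (Set.Icc 0 L) y ≠ 0) :
    ∃ C₀ > (0 : ℝ), ∃ δ₀ > (0 : ℝ), ∀ lam : ℝ, ∀ δ ∈ Set.Ioo (0 : ℝ) δ₀,
      volume {y ∈ Set.Ioo (0 : ℝ) L | |v y - lam| < δ ^ m} ≤ ENNReal.ofReal (C₀ * δ) :=
  stmt_4_general L hL m v hv hnondeg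
end

section
/- Fix κ ∈ (0,1). A set E ⊂ ℝ^d is H¹-thin (i.e. there exist C, δ₀ > 0 with ∫_{E_δ} g² ≤ (1/2)∫ g² + Cδ² ∫|∇g|² for all δ ∈ (0,δ₀), g ∈ H¹(ℝ^d)) if and only if there exist C', δ₀' > 0 such that ∫_{E_δ} g² ≤ κ ∫ g² + C'δ² ∫|∇g|² for all δ ∈ (0,δ₀') and all g ∈ H¹(ℝ^d). -/
/-!
Localize `g` near `E` with a cutoff `φ` that is `1` on `E_δ`, vanishes off `E_{Kδ}` and has
gradient `O(1/((K-1)δ))`. The inequality at scale `δ` applied to `φ g`, combined with the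
inequality at scale `Kδ` applied to `g` to bound `∫ (φ g)²`, improves the constant `κ` to
`κ² + ε`, where `ε ~ C/(K-1)²` pays for `∇φ` and is made small by taking `K` large.
Iterating `κ ↦ κ² + ε` drives any constant below `1` down to any positive value;
raising the constant is trivial.
-/

open MeasureTheory Metric Set

/-- `E ⊂ ℝ^d` satisfies the thinness inequality with constant `κ`: there exist
`C, δ₀ > 0` with `∫_{E_δ} g² ≤ κ∫ g² + Cδ²∫|∇g|²` for all `δ ∈ (0,δ₀)` and all
`g ∈ H¹(ℝ^d)`; here `E_δ` is the open `δ`-neighborhood of `E`. -/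
def ThinWith (d : ℕ) (E : Set (EuclideanSpace ℝ (Fin d))) (κ : ℝ) : Prop :=
  ∃ C > (0 : ℝ), ∃ δ₀ > (0 : ℝ), ∀ δ ∈ Set.Ioo (0 : ℝ) δ₀,
    ∀ g : EuclideanSpace ℝ (Fin d) → ℝ, Differentiable ℝ g →
      MemLp g 2 volume → MemLp (fun x => ‖fderiv ℝ g x‖) 2 volume →
      ∫ x in Metric.thickening δ E, (g x) ^ 2 ≤
        κ * (∫ x, (g x) ^ 2) + C * δ ^ 2 * ∫ x, ‖fderiv ℝ g x‖ ^ 2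

open Convolution ContinuousLinearMap
open scoped NNReal ENNReal

theorem exists_lipschitz_ramp {α : Type*} [PseudoMetricSpace α] {f : α → ℝ}
    (hf : LipschitzWith 1 f) {r s : ℝ} (hrs : r < s) :
    ∃ u : α → ℝ, LipschitzWith (Real.toNNReal (s - r)⁻¹) u ∧ (∀ x, |u x| ≤ 1) ∧
      (∀ x, f x ≤ r → u x = 1) ∧ ∀ x, s ≤ f x → u x = 0 := by
  have hsr : 0 < s - r := sub_pos.2 hrs
  refine ⟨fun x => max 0 (min 1 ((s - f x) / (s - r))), ?_, fun x => ?_, fun x hx => ?_,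
    fun x hx => ?_⟩
  · refine ((LipschitzWith.of_dist_le_mul fun x y => ?_).const_min 1).const_max 0
    rw [Real.coe_toNNReal _ (inv_nonneg.2 hsr.le), Real.dist_eq, ← sub_div, abs_div,
      abs_of_pos hsr, div_eq_inv_mul, sub_sub_sub_cancel_left, ← Real.dist_eq, dist_comm]
    simpa using mul_le_mul_of_nonneg_left (hf.dist_le_mul x y) (inv_nonneg.2 hsr.le)
  · exact abs_le.2 ⟨by linarith [le_max_left 0 (min 1 ((s - f x) / (s - r)))],
      max_le zero_le_one (min_le_left _ _)⟩
  · dsimp only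
    rw [min_eq_left ((one_le_div hsr).2 (by linarith : s - r ≤ s - f x)),
      max_eq_right zero_le_one]
  · have hx' : (s - f x) / (s - r) ≤ 0 := div_nonpos_of_nonpos_of_nonneg (by linarith) hsr.le
    dsimp only
    rw [min_eq_right (hx'.trans zero_le_one), max_eq_left hx']

section Cutoff

variable {X : Type*} [NormedAddCommGroup X] [NormedSpace ℝ X] [FiniteDimensional ℝ X]

theorem ContDiffBump.lipschitzWith_normed_convolution [MeasurableSpace X] [BorelSpace X]
    {μ : Measure X} [μ.IsAddHaarMeasure] (ψ : ContDiffBump (0 : X)) {K : ℝ≥0} {u : X → ℝ}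
    (hu : LipschitzWith K u) : LipschitzWith K (ψ.normed μ ⋆[lsmul ℝ ℝ, μ] u) := by
  have hconv : ConvolutionExists (ψ.normed μ) u (lsmul ℝ ℝ) μ :=
    ψ.hasCompactSupport_normed.convolutionExists_left _ ψ.continuous_normed
      hu.continuous.locallyIntegrable
  refine LipschitzWith.of_dist_le_mul fun x y => ?_
  rw [dist_eq_norm, convolution_def, convolution_def, ← integral_sub (hconv x) (hconv y)]
  calc ‖∫ t, (lsmul ℝ ℝ (ψ.normed μ t) (u (x - t)) - lsmul ℝ ℝ (ψ.normed μ t) (u (y - t))) ∂μ‖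
      ≤ ∫ t, ψ.normed μ t * (K * dist x y) ∂μ := by
        refine norm_integral_le_of_norm_le (ψ.integrable_normed.mul_const _)
          (ae_of_all _ fun t => ?_)
        rw [lsmul_apply, lsmul_apply, smul_eq_mul, smul_eq_mul, ← mul_sub, norm_mul,
          Real.norm_of_nonneg (ψ.nonneg_normed t), ← dist_eq_norm, ← dist_sub_right x y t]
        exact mul_le_mul_of_nonneg_left (hu.dist_le_mul _ _) (ψ.nonneg_normed t)
    _ = K * dist x y := by rw [integral_mul_const, ψ.integral_normed, one_mul]

theorem exists_cutoff_thickening (E : Set X) {a b : ℝ} (hab : a < b) :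
    ∃ φ : X → ℝ, Differentiable ℝ φ ∧ (∀ x, |φ x| ≤ 1) ∧ EqOn φ 1 (thickening a E) ∧
      EqOn φ 0 (thickening b E)ᶜ ∧ ∀ x, ‖fderiv ℝ φ x‖ ≤ 3 / (b - a) := by
  rcases E.eq_empty_or_nonempty with rfl | hE
  · refine ⟨0, differentiable_const 0, by simp, by simp, fun _ _ => rfl, fun x => ?_⟩
    simpa using div_nonneg zero_le_three (sub_nonneg.2 hab.le)
  borelize X
  -- `u` falls from `1` to `0` across the middle third of the gap, so mollifying at radius `w`
  -- keeps it `1` on `E_a` and `0` off `E_b`.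
  set w := (b - a) / 3 with hw_def
  have hw : 0 < w := by rw [hw_def]; linarith
  obtain ⟨u, hu_lip, hu_abs, hu_one, hu_zero⟩ :=
    exists_lipschitz_ramp (lipschitz_infDist_pt E) (show a + w < a + 2 * w by linarith)
  rw [show a + 2 * w - (a + w) = w by ring] at hu_lip
  let ψ : ContDiffBump (0 : X) := ⟨w / 2, w, half_pos hw, half_lt_self hw⟩
  let μ : Measure X := Measure.addHaar
  have hdist : ∀ x, ∀ y ∈ ball x ψ.rOut, |infDist y E - infDist x E| < w := fun x y hy => by
    rw [abs_sub_comm, ← Real.dist_eq]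
    exact (by simpa using (lipschitz_infDist_pt E).dist_le_mul x y :
      dist (infDist x E) (infDist y E) ≤ dist x y).trans_lt (mem_ball'.1 hy)
  refine ⟨ψ.normed μ ⋆[lsmul ℝ ℝ, μ] u, ?_, fun x => ?_, fun x hx => ?_, fun x hx => ?_,
    fun x => ?_⟩
  · exact (ψ.hasCompactSupport_normed.contDiff_convolution_left (lsmul ℝ ℝ)
      (ψ.contDiff_normed (n := 1)) hu_lip.continuous.locallyIntegrable).differentiable one_ne_zero
  · simpa using dist_convolution_le (x₀ := x) (z₀ := 0) zero_le_one ψ.support_normed_eq.subset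
      ψ.nonneg_normed ψ.integral_normed hu_lip.continuous.aestronglyMeasurable
      (fun y _ => by simpa using hu_abs y)
  · rw [mem_thickening_iff_infDist_lt hE] at hx
    rw [ψ.normed_convolution_eq_right fun y hy => ?_, hu_one x (by linarith), Pi.one_apply]
    rw [hu_one x (by linarith), hu_one y (by linarith [(abs_lt.1 (hdist x y hy)).2])]
  · rw [mem_compl_iff, mem_thickening_iff_infDist_lt hE, not_lt] at hx
    have hx' : a + 3 * w ≤ infDist x E := by rw [hw_def]; linarith
    rw [ψ.normed_convolution_eq_right fun y hy => ?_, hu_zero x (by linarith), Pi.zero_apply]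
    rw [hu_zero x (by linarith), hu_zero y (by linarith [(abs_lt.1 (hdist x y hy)).1])]
  · refine (norm_fderiv_le_of_lipschitz ℝ (ψ.lipschitzWith_normed_convolution hu_lip)).trans_eq ?_
    rw [Real.coe_toNNReal _ (inv_nonneg.2 hw.le), hw_def, inv_div]

end Cutoff

section BoundedMultiplier

variable {X : Type*} [MeasurableSpace X] {μ : Measure X} {φ g : X → ℝ}

theorem MeasureTheory.MemLp.mul_of_abs_le_one {p : ℝ≥0∞} (hg : MemLp g p μ)
    (hφ : AEStronglyMeasurable φ μ) (hφ_abs : ∀ x, |φ x| ≤ 1) : MemLp (fun x => φ x * g x) p μ :=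
  hg.mul (memLp_top_of_bound hφ 1 (ae_of_all _ fun x => by simpa using hφ_abs x))

theorem integral_sq_mul_le_setIntegral_sq {s : Set X} (hs : MeasurableSet s)
    (hφ_abs : ∀ x, |φ x| ≤ 1) (hφ_zero : EqOn φ 0 sᶜ) (hg2 : MemLp g 2 μ)
    (hφg2 : MemLp (fun x => φ x * g x) 2 μ) :
    ∫ x, (φ x * g x) ^ 2 ∂μ ≤ ∫ x in s, g x ^ 2 ∂μ := by
  rw [← setIntegral_eq_integral_of_forall_compl_eq_zero fun x hx => by simp [hφ_zero hx]]
  refine setIntegral_mono_on hφg2.integrable_sq.integrableOn hg2.integrable_sq.integrableOn hs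
    fun x _ => ?_
  rw [mul_pow, ← sq_abs (φ x)]
  exact mul_le_of_le_one_left (sq_nonneg _) (pow_le_one₀ (abs_nonneg _) (hφ_abs x))

end BoundedMultiplier

section ProductWithCutoff

variable {X : Type*} [NormedAddCommGroup X] [NormedSpace ℝ X] {φ g : X → ℝ} {c : ℝ}

theorem norm_fderiv_mul_le (hφ : Differentiable ℝ φ) (hg : Differentiable ℝ g)
    (hφ_abs : ∀ x, |φ x| ≤ 1) (hφ' : ∀ x, ‖fderiv ℝ φ x‖ ≤ c) (x : X) :
    ‖fderiv ℝ (fun x => φ x * g x) x‖ ≤ ‖fderiv ℝ g x‖ + c * |g x| := by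
  rw [fderiv_fun_mul (hφ x) (hg x)]
  calc ‖φ x • fderiv ℝ g x + g x • fderiv ℝ φ x‖
      ≤ |φ x| * ‖fderiv ℝ g x‖ + |g x| * ‖fderiv ℝ φ x‖ := by
        simpa only [norm_smul, Real.norm_eq_abs] using
          norm_add_le (φ x • fderiv ℝ g x) (g x • fderiv ℝ φ x)
    _ ≤ 1 * ‖fderiv ℝ g x‖ + |g x| * c := by gcongr; exacts [hφ_abs x, hφ' x]
    _ = ‖fderiv ℝ g x‖ + c * |g x| := by ring

variable [MeasurableSpace X] {μ : Measure X}

theorem integral_sq_norm_fderiv_mul_le (hφ : Differentiable ℝ φ) (hg : Differentiable ℝ g)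
    (hφ_abs : ∀ x, |φ x| ≤ 1) (hφ' : ∀ x, ‖fderiv ℝ φ x‖ ≤ c)
    (hg2 : MemLp g 2 μ) (hDg2 : MemLp (fun x => ‖fderiv ℝ g x‖) 2 μ) :
    ∫ x, ‖fderiv ℝ (fun x => φ x * g x) x‖ ^ 2 ∂μ ≤
      2 * ∫ x, ‖fderiv ℝ g x‖ ^ 2 ∂μ + 2 * c ^ 2 * ∫ x, g x ^ 2 ∂μ := by
  rw [← integral_const_mul, ← integral_const_mul,
    ← integral_add (hDg2.integrable_sq.const_mul 2) (hg2.integrable_sq.const_mul _)]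
  refine integral_mono_of_nonneg (ae_of_all _ fun x => sq_nonneg _)
    ((hDg2.integrable_sq.const_mul 2).add (hg2.integrable_sq.const_mul _)) (ae_of_all _ fun x => ?_)
  calc ‖fderiv ℝ (fun x => φ x * g x) x‖ ^ 2 ≤ (‖fderiv ℝ g x‖ + c * |g x|) ^ 2 :=
        pow_le_pow_left₀ (norm_nonneg _) (norm_fderiv_mul_le hφ hg hφ_abs hφ' x) 2
    _ ≤ 2 * (‖fderiv ℝ g x‖ ^ 2 + (c * |g x|) ^ 2) := add_sq_le
    _ = 2 * ‖fderiv ℝ g x‖ ^ 2 + 2 * c ^ 2 * g x ^ 2 := by rw [mul_pow, sq_abs]; ring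

theorem memLp_norm_fderiv_mul [OpensMeasurableSpace X] (hφ : Differentiable ℝ φ)
    (hg : Differentiable ℝ g) (hφ_abs : ∀ x, |φ x| ≤ 1) (hφ' : ∀ x, ‖fderiv ℝ φ x‖ ≤ c)
    (hg2 : MemLp g 2 μ) (hDg2 : MemLp (fun x => ‖fderiv ℝ g x‖) 2 μ) :
    MemLp (fun x => ‖fderiv ℝ (fun x => φ x * g x) x‖) 2 μ :=
  (hDg2.add (hg2.abs.const_mul c)).of_le (measurable_fderiv ℝ _).norm.aestronglyMeasurable <|
    ae_of_all _ fun x => by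
      simp only [Pi.add_apply, Pi.abs_apply, Real.norm_eq_abs, abs_norm]
      exact (norm_fderiv_mul_le hφ hg hφ_abs hφ' x).trans (le_abs_self _)

end ProductWithCutoff

-- `ThinWith d E κ` unfolds to `∃ C > 0, ∃ δ₀ > 0, ∀ δ ∈ Ioo 0 δ₀, ThinAt E κ C δ`.
def ThinAt {X : Type*} [NormedAddCommGroup X] [NormedSpace ℝ X] [MeasureSpace X] (E : Set X)
    (κ C δ : ℝ) : Prop :=
  ∀ g : X → ℝ, Differentiable ℝ g → MemLp g 2 volume → MemLp (fun x => ‖fderiv ℝ g x‖) 2 volume →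
    ∫ x in thickening δ E, g x ^ 2 ≤ κ * (∫ x, g x ^ 2) + C * δ ^ 2 * ∫ x, ‖fderiv ℝ g x‖ ^ 2

namespace ThinAt

variable {X : Type*} [NormedAddCommGroup X] [NormedSpace ℝ X] [MeasureSpace X] {E : Set X}
  {κ κ' C δ : ℝ}

theorem mono (h : ThinAt E κ C δ) (hκ : κ ≤ κ') : ThinAt E κ' C δ := fun g hg hg2 hDg2 => by
  have := mul_le_mul_of_nonneg_right hκ (integral_nonneg (μ := volume) fun x => sq_nonneg (g x))
  linarith [h g hg hg2 hDg2]

theorem sq_add [FiniteDimensional ℝ X] [BorelSpace X] {K : ℝ} (hκ : 0 ≤ κ) (hC : 0 ≤ C)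
    (hδ : 0 < δ) (hK : 1 < K) (h : ThinAt E κ C δ) (h' : ThinAt E κ C (K * δ)) :
    ThinAt E (κ ^ 2 + 18 * C / (K - 1) ^ 2) (C * (κ * K ^ 2 + 2)) δ := by
  intro g hg hg2 hDg2
  obtain ⟨φ, hφ, hφ_abs, hφ_one, hφ_zero, hDφ⟩ :=
    exists_cutoff_thickening E (show δ < K * δ by nlinarith)
  set c := 3 / (K * δ - δ)
  set f := fun x => φ x * g x
  have hf2 : MemLp f 2 volume := hg2.mul_of_abs_le_one hφ.continuous.aestronglyMeasurable hφ_abs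
  have h_inner : ∫ x in thickening δ E, g x ^ 2 = ∫ x in thickening δ E, f x ^ 2 :=
    setIntegral_congr_fun isOpen_thickening.measurableSet fun x hx => by
      simp [f, hφ_one hx]
  have h_outer : ∫ x, f x ^ 2 ≤ κ * (∫ x, g x ^ 2) + C * (K * δ) ^ 2 * ∫ x, ‖fderiv ℝ g x‖ ^ 2 :=
    (integral_sq_mul_le_setIntegral_sq isOpen_thickening.measurableSet hφ_abs hφ_zero hg2
      hf2).trans (h' g hg hg2 hDg2)
  have h_grad := integral_sq_norm_fderiv_mul_le hφ hg hφ_abs hDφ hg2 hDg2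
  have hc : C * δ ^ 2 * (2 * c ^ 2) = 18 * C / (K - 1) ^ 2 := by
    have hK1 : K - 1 ≠ 0 := by linarith
    simp only [c]
    rw [show K * δ - δ = (K - 1) * δ by ring]
    field_simp
    ring
  calc ∫ x in thickening δ E, g x ^ 2 = ∫ x in thickening δ E, f x ^ 2 := h_inner
    _ ≤ κ * (∫ x, f x ^ 2) + C * δ ^ 2 * ∫ x, ‖fderiv ℝ f x‖ ^ 2 :=
      h f (hφ.mul hg) hf2 (memLp_norm_fderiv_mul hφ hg hφ_abs hDφ hg2 hDg2)
    _ ≤ κ * (κ * (∫ x, g x ^ 2) + C * (K * δ) ^ 2 * ∫ x, ‖fderiv ℝ g x‖ ^ 2) +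
        C * δ ^ 2 * (2 * (∫ x, ‖fderiv ℝ g x‖ ^ 2) + 2 * c ^ 2 * ∫ x, g x ^ 2) := by
      gcongr
    _ = _ := by rw [← hc]; ring

end ThinAt

namespace ThinWith

variable {d : ℕ} {E : Set (EuclideanSpace ℝ (Fin d))} {κ κ' : ℝ}

theorem mono (h : ThinWith d E κ) (hκ : κ ≤ κ') : ThinWith d E κ' := by
  obtain ⟨C, hC, δ₀, hδ₀, H⟩ := h
  exact ⟨C, hC, δ₀, hδ₀, fun δ hδ => ThinAt.mono (H δ hδ) hκ⟩

theorem sq_add (h : ThinWith d E κ) (hκ : 0 ≤ κ) {ε : ℝ} (hε : 0 < ε) :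
    ThinWith d E (κ ^ 2 + ε) := by
  obtain ⟨C, hC, δ₀, hδ₀, H⟩ := h
  -- `K` is chosen so that the gradient of the cutoff costs exactly `ε`
  set K := 1 + √(18 * C / ε) with hK_def
  have hK : 1 < K := by
    rw [hK_def, lt_add_iff_pos_right]
    positivity
  have hKε : 18 * C / (K - 1) ^ 2 = ε := by
    rw [hK_def, add_sub_cancel_left, Real.sq_sqrt (by positivity)]
    field_simp
  refine ⟨C * (κ * K ^ 2 + 2), by positivity, δ₀ / K, by positivity, fun δ hδ => ?_⟩
  have hKδ : K * δ < δ₀ := by rw [← lt_div_iff₀' (by linarith)]; exact hδ.2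
  have hδδ₀ : δ < δ₀ := hδ.2.trans_le (div_le_self hδ₀.le hK.le)
  rw [← hKε]
  exact ThinAt.sq_add hκ hC.le hδ.1 hK (H δ ⟨hδ.1, hδδ₀⟩) (H (K * δ) ⟨by nlinarith [hδ.1], hKδ⟩)

theorem mul_of_lt (h : ThinWith d E κ) (hκ : 0 < κ) {r : ℝ} (hκr : κ < r) :
    ThinWith d E (r * κ) := by
  simpa [show κ ^ 2 + κ * (r - κ) = r * κ by ring] using
    h.sq_add hκ.le (mul_pos hκ (sub_pos.2 hκr))

theorem of_lt_one {s t : ℝ} (h : ThinWith d E s) (hs : s < 1) (ht : 0 < t) : ThinWith d E t := by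
  rcases le_or_gt s t with hst | hts
  · exact h.mono hst
  have hs0 : 0 < s := ht.trans hts
  obtain ⟨r, hsr, hr1⟩ := exists_between hs
  have hr0 : 0 < r := hs0.trans hsr
  have hpow : ∀ n : ℕ, ThinWith d E (r ^ n * s) := by
    intro n
    induction n with
    | zero => simpa using h
    | succ n ih =>
      rw [pow_succ', mul_assoc]
      refine ih.mul_of_lt (by positivity) ((mul_le_of_le_one_left hs0.le ?_).trans_lt hsr)
      exact pow_le_one₀ hr0.le hr1.le
  obtain ⟨n, hn⟩ := exists_pow_lt_of_lt_one (div_pos ht hs0) hr1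
  exact (hpow n).mono ((lt_div_iff₀ hs0).1 hn).le

end ThinWith

/-- For any fixed `κ ∈ (0,1)`, a set `E ⊂ ℝ^d` is `H¹`-thin (thinness inequality with
constant `1/2`) if and only if it satisfies the thinness inequality with constant `κ`. -/
theorem stmt_12 (d : ℕ) (E : Set (EuclideanSpace ℝ (Fin d))) (κ : ℝ)
    (hκ : κ ∈ Set.Ioo (0 : ℝ) 1) :
    ThinWith d E (1 / 2) ↔ ThinWith d E κ :=
  ⟨fun h => h.of_lt_one (by norm_num) hκ.1, fun h => h.of_lt_one hκ.2 (by norm_num)⟩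
end

section
/- The graph E = {(x, h(x)) : x ∈ ℝ^{d−1}} of any Lipschitz function h : ℝ^{d−1} → ℝ is H¹-thin in ℝ^d; moreover, with N = √(1 + M²) where M is a Lipschitz constant of h, one has ∫_{E_δ} g² dx ≤ 2Nδ ‖g‖_{L²} ‖∇g‖_{L²} for all g ∈ H¹(ℝ^d) and δ > 0. -/
/-!
On a vertical line, `u(y)² ≤ ∫ |u| |u'|`: the fundamental theorem of calculus applies to `u²`,
whose derivative `2uu'` is integrable, so `u²` vanishes at `±∞`. Integrating this over a vertical
interval of length `2q` and then over the base (Fubini) bounds `∫ g²` over the slab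
`|y - h(x)| < q` by `2q ∫ |g| |∇g|`, and Cauchy–Schwarz bounds the latter by `2q ‖g‖₂ ‖∇g‖₂`.
If `(x, y)` is within `δ` of a point `(x', h x')` of the graph then
`|y - h x| ≤ |y - h x'| + M |x - x'| ≤ √(1 + M²) δ`, so `E_δ` lies in the slab with
`q = √(1 + M²) δ`. The thinness inequality follows by AM–GM.
-/

open MeasureTheory Metric Set Filter

section Line

variable {u u' w : ℝ → ℝ}

theorem sq_le_integral_abs_mul_of_hasDerivAt (hu : ∀ t, HasDerivAt u (u' t) t)
    (hu'w : ∀ t, |u' t| ≤ w t) (hu2 : Integrable fun t => u t ^ 2)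
    (huw : Integrable fun t => |u t| * w t) (y : ℝ) :
    u y ^ 2 ≤ ∫ t, |u t| * w t := by
  set F' : ℝ → ℝ := fun t => 2 * u t * u' t
  have hF : ∀ t, HasDerivAt (fun s => u s ^ 2) (F' t) t := fun t => by
    simpa [F', mul_comm, mul_left_comm] using (hu t).fun_pow 2
  have hF'_le : ∀ t, |F' t| ≤ 2 * (|u t| * w t) := fun t => by
    simp only [F', abs_mul, abs_two, mul_assoc]
    gcongr
    exact hu'w t
  have hF'_int : Integrable F' := by
    refine (huw.const_mul 2).mono' ?_ (Eventually.of_forall hF'_le)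
    rw [show F' = deriv fun s => u s ^ 2 from funext fun t => (hF t).deriv.symm]
    exact (measurable_deriv _).aestronglyMeasurable
  have h_left : ∫ t in Iic y, F' t = u y ^ 2 := by
    rw [integral_Iic_of_hasDerivAt_of_tendsto' (fun t _ => hF t) hF'_int.integrableOn
      (tendsto_zero_of_hasDerivAt_of_integrableOn_Iic (a := y) (fun t _ => hF t)
        hF'_int.integrableOn hu2.integrableOn), sub_zero]
  have h_right : ∫ t in Ioi y, F' t = -u y ^ 2 := by
    rw [integral_Ioi_of_hasDerivAt_of_tendsto' (fun t _ => hF t) hF'_int.integrableOn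
      (tendsto_zero_of_hasDerivAt_of_integrableOn_Ioi (a := y) (fun t _ => hF t)
        hF'_int.integrableOn hu2.integrableOn), zero_sub]
  have h_le_left : u y ^ 2 ≤ ∫ t in Iic y, |F' t| := by
    rw [← h_left]
    exact (le_abs_self _).trans abs_integral_le_integral_abs
  have h_le_right : u y ^ 2 ≤ ∫ t in Ioi y, |F' t| := by
    rw [← neg_neg (u y ^ 2), ← h_right]
    exact (neg_le_abs _).trans abs_integral_le_integral_abs
  calc u y ^ 2 ≤ ((∫ t in Iic y, |F' t|) + ∫ t in Ioi y, |F' t|) / 2 := by linarith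
    _ = (∫ t, |F' t|) / 2 := by
        rw [intervalIntegral.integral_Iic_add_Ioi hF'_int.abs.integrableOn
          hF'_int.abs.integrableOn]
    _ ≤ ∫ t, |u t| * w t := by
        rw [div_le_iff₀ two_pos, mul_comm, ← integral_const_mul]
        exact integral_mono hF'_int.abs (huw.const_mul 2) hF'_le

theorem setIntegral_Ioo_sq_le_of_hasDerivAt (hu : ∀ t, HasDerivAt u (u' t) t)
    (hu'w : ∀ t, |u' t| ≤ w t) (hu2 : Integrable fun t => u t ^ 2)
    (huw : Integrable fun t => |u t| * w t) (c : ℝ) {r : ℝ} (hr : 0 ≤ r) :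
    ∫ t in Ioo (c - r) (c + r), u t ^ 2 ≤ 2 * r * ∫ t, |u t| * w t := by
  have h_bound := norm_setIntegral_le_of_norm_le_const (μ := volume) (s := Ioo (c - r) (c + r))
    measure_Ioo_lt_top fun t _ => (Real.norm_of_nonneg (sq_nonneg (u t))).trans_le
      (sq_le_integral_abs_mul_of_hasDerivAt hu hu'w hu2 huw t)
  rw [Real.norm_eq_abs, Real.volume_real_Ioo_of_le (by linarith)] at h_bound
  exact (le_abs_self _).trans (h_bound.trans_eq (by ring))

end Line

theorem integral_abs_mul_le_sqrt_mul_sqrt {α : Type*} [MeasurableSpace α] {μ : Measure α}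
    {f g : α → ℝ} (hf : MemLp f 2 μ) (hg : MemLp g 2 μ) :
    ∫ a, |f a| * |g a| ∂μ ≤ √(∫ a, f a ^ 2 ∂μ) * √(∫ a, g a ^ 2 ∂μ) := by
  have := integral_mul_norm_le_Lp_mul_Lq (μ := μ) (f := f) (g := g) Real.HolderConjugate.two_two
    (by rwa [ENNReal.ofReal_ofNat]) (by rwa [ENNReal.ofReal_ofNat] : MemLp g (ENNReal.ofReal 2) μ)
  rw [Real.sqrt_eq_rpow, Real.sqrt_eq_rpow]
  simpa only [Real.norm_eq_abs, Real.rpow_two, sq_abs] using this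

noncomputable def euclideanSnocEquiv (d : ℕ) :
    (Fin d → ℝ) × ℝ ≃ᵐ EuclideanSpace ℝ (Fin (d + 1)) :=
  MeasurableEquiv.prodComm.trans
    ((MeasurableEquiv.piFinSuccAbove (fun _ : Fin (d + 1) => ℝ) (Fin.last d)).symm.trans
      (MeasurableEquiv.toLp 2 (Fin (d + 1) → ℝ)))

namespace euclideanSnocEquiv

variable {d : ℕ}

@[simp]
theorem ofLp_apply (x : Fin d → ℝ) (t : ℝ) :
    (euclideanSnocEquiv d (x, t) : Fin (d + 1) → ℝ) = Fin.snoc x t := by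
  simp [euclideanSnocEquiv, MeasurableEquiv.prodComm, MeasurableEquiv.piFinSuccAbove,
    Fin.snocEquiv]

theorem measurePreserving :
    MeasurePreserving (euclideanSnocEquiv d) (volume.prod volume) volume :=
  Measure.measurePreserving_swap.trans
    ((volume_preserving_piFinSuccAbove (fun _ : Fin (d + 1) => ℝ) (Fin.last d)).symm _ |>.trans
      (EuclideanSpace.volume_preserving_symm_measurableEquiv_toLp (Fin (d + 1))).symm)

theorem hasDerivAt_slice (x : Fin d → ℝ) (t : ℝ) :
    HasDerivAt (fun s => euclideanSnocEquiv d (x, s)) (EuclideanSpace.single (Fin.last d) 1) t := by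
  have h_affine : (fun s => euclideanSnocEquiv d (x, s)) =
      fun s => euclideanSnocEquiv d (x, 0) + s • EuclideanSpace.single (Fin.last d) 1 := by
    funext s
    ext j
    refine Fin.lastCases ?_ (fun i => ?_) j <;>
      simp [(Fin.castSucc_lt_last _).ne]
  rw [h_affine]
  simpa using ((hasDerivAt_id t).smul_const (EuclideanSpace.single (Fin.last d) (1 : ℝ))).const_add
    (euclideanSnocEquiv d (x, 0))

theorem ae_integrable_slice {F : EuclideanSpace ℝ (Fin (d + 1)) → ℝ} (hF : Integrable F) :
    ∀ᵐ x, Integrable fun t => F (euclideanSnocEquiv d (x, t)) :=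
  ((measurePreserving.integrable_comp_emb (euclideanSnocEquiv d).measurableEmbedding).2
    hF).prod_right_ae

theorem integral_le_integral_of_ae_slice_le {F G : EuclideanSpace ℝ (Fin (d + 1)) → ℝ}
    (hF : Integrable F) (hG : Integrable G)
    (hle : ∀ᵐ x, ∫ t, F (euclideanSnocEquiv d (x, t)) ≤ ∫ t, G (euclideanSnocEquiv d (x, t))) :
    ∫ p, F p ≤ ∫ p, G p := by
  have hemb := (euclideanSnocEquiv d).measurableEmbedding
  have hF' := (measurePreserving.integrable_comp_emb hemb).2 hF
  have hG' := (measurePreserving.integrable_comp_emb hemb).2 hG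
  rw [← measurePreserving.integral_comp hemb, ← measurePreserving.integral_comp hemb,
    integral_prod (fun z => F _) hF', integral_prod (fun z => G _) hG']
  exact integral_mono_ae hF'.integral_prod_left hG'.integral_prod_left hle

end euclideanSnocEquiv

section Graph

variable {d : ℕ}

def lastCoordGraph (h : EuclideanSpace ℝ (Fin d) → ℝ) : Set (EuclideanSpace ℝ (Fin (d + 1))) :=
  {p | p (Fin.last d) = h (WithLp.toLp 2 (Fin.init (p : Fin (d + 1) → ℝ)))}

def lastCoordSlab (h : EuclideanSpace ℝ (Fin d) → ℝ) (q : ℝ) :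
    Set (EuclideanSpace ℝ (Fin (d + 1))) :=
  {p | |p (Fin.last d) - h (WithLp.toLp 2 (Fin.init (p : Fin (d + 1) → ℝ)))| < q}

theorem continuous_toLp_init :
    Continuous fun p : EuclideanSpace ℝ (Fin (d + 1)) =>
      (WithLp.toLp 2 (Fin.init (p : Fin (d + 1) → ℝ)) : EuclideanSpace ℝ (Fin d)) := by
  unfold Fin.init
  fun_prop

theorem measurableSet_lastCoordSlab {h : EuclideanSpace ℝ (Fin d) → ℝ} (hh : Measurable h)
    (q : ℝ) : MeasurableSet (lastCoordSlab h q) :=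
  measurableSet_lt (((PiLp.continuous_apply 2 _ (Fin.last d)).measurable.sub
    (hh.comp continuous_toLp_init.measurable)).abs) measurable_const

theorem euclideanSnocEquiv_mem_lastCoordSlab {h : EuclideanSpace ℝ (Fin d) → ℝ} {q : ℝ}
    (x : Fin d → ℝ) (t : ℝ) :
    euclideanSnocEquiv d (x, t) ∈ lastCoordSlab h q ↔
      t ∈ Ioo (h (WithLp.toLp 2 x) - q) (h (WithLp.toLp 2 x) + q) := by
  simp only [lastCoordSlab, mem_ofPred_eq, mem_Ioo, abs_sub_lt_iff,
    euclideanSnocEquiv.ofLp_apply, Fin.snoc_last, Fin.init_snoc]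
  constructor <;> rintro ⟨h₁, h₂⟩ <;> constructor <;> linarith

theorem dist_sq_eq_dist_init_sq_add (p z : EuclideanSpace ℝ (Fin (d + 1))) :
    dist p z ^ 2 = dist (WithLp.toLp 2 (Fin.init (p : Fin (d + 1) → ℝ)) : EuclideanSpace ℝ (Fin d))
      (WithLp.toLp 2 (Fin.init (z : Fin (d + 1) → ℝ))) ^ 2 +
      (p (Fin.last d) - z (Fin.last d)) ^ 2 := by
  rw [EuclideanSpace.dist_eq, EuclideanSpace.dist_eq, Real.sq_sqrt (by positivity),
    Real.sq_sqrt (by positivity), Fin.sum_univ_castSucc, Real.dist_eq, sq_abs]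
  rfl

theorem add_mul_le_sqrt_one_add_sq_mul_sqrt (a b M : ℝ) :
    b + M * a ≤ √(1 + M ^ 2) * √(a ^ 2 + b ^ 2) := by
  rw [← Real.sqrt_mul (by positivity)]
  refine Real.le_sqrt_of_sq_le ?_
  nlinarith [sq_nonneg (a - M * b)]

theorem thickening_lastCoordGraph_subset {M : NNReal} {h : EuclideanSpace ℝ (Fin d) → ℝ}
    (hh : LipschitzWith M h) (δ : ℝ) :
    thickening δ (lastCoordGraph h) ⊆ lastCoordSlab h (√(1 + (M : ℝ) ^ 2) * δ) := by
  intro p hp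
  obtain ⟨z, hz, hpz⟩ := mem_thickening_iff.1 hp
  set P : EuclideanSpace ℝ (Fin d) := WithLp.toLp 2 (Fin.init (p : Fin (d + 1) → ℝ))
  set Z : EuclideanSpace ℝ (Fin d) := WithLp.toLp 2 (Fin.init (z : Fin (d + 1) → ℝ))
  have h_lip : |h Z - h P| ≤ M * dist P Z := by
    rw [← Real.dist_eq, dist_comm P]
    exact hh.dist_le_mul Z P
  calc |p (Fin.last d) - h P|
      ≤ |p (Fin.last d) - z (Fin.last d)| + |h Z - h P| := by
        rw [← show z (Fin.last d) = h Z from hz]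
        exact abs_sub_le _ _ _
    _ ≤ |p (Fin.last d) - z (Fin.last d)| + M * dist P Z := by gcongr
    _ ≤ √(1 + (M : ℝ) ^ 2) * √(dist P Z ^ 2 + |p (Fin.last d) - z (Fin.last d)| ^ 2) :=
        add_mul_le_sqrt_one_add_sq_mul_sqrt _ _ _
    _ = √(1 + (M : ℝ) ^ 2) * dist p z := by
        rw [sq_abs, ← dist_sq_eq_dist_init_sq_add, Real.sqrt_sq dist_nonneg]
    _ < √(1 + (M : ℝ) ^ 2) * δ := by gcongr

theorem integral_lastCoordSlab_sq_le {h : EuclideanSpace ℝ (Fin d) → ℝ} (hh : Measurable h)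
    {q : ℝ} (hq : 0 ≤ q) {g : EuclideanSpace ℝ (Fin (d + 1)) → ℝ} (hg : Differentiable ℝ g)
    (hg2 : Integrable fun p => g p ^ 2)
    (hgg' : Integrable fun p => |g p| * ‖fderiv ℝ g p‖) :
    ∫ p in lastCoordSlab h q, g p ^ 2 ≤ 2 * q * ∫ p, |g p| * ‖fderiv ℝ g p‖ := by
  rw [← integral_indicator (measurableSet_lastCoordSlab hh q), ← integral_const_mul]
  refine euclideanSnocEquiv.integral_le_integral_of_ae_slice_le
    (hg2.indicator (measurableSet_lastCoordSlab hh q)) (hgg'.const_mul _) ?_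
  filter_upwards [euclideanSnocEquiv.ae_integrable_slice hg2,
    euclideanSnocEquiv.ae_integrable_slice hgg'] with x hx2 hxg'
  have h_slice : (fun t => (lastCoordSlab h q).indicator (fun p => g p ^ 2)
      (euclideanSnocEquiv d (x, t))) =
      (Ioo (h (WithLp.toLp 2 x) - q) (h (WithLp.toLp 2 x) + q)).indicator
        fun t => g (euclideanSnocEquiv d (x, t)) ^ 2 := by
    funext t
    simp only [indicator, euclideanSnocEquiv_mem_lastCoordSlab]
  rw [h_slice, integral_indicator measurableSet_Ioo, integral_const_mul]
  refine setIntegral_Ioo_sq_le_of_hasDerivAt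
    (fun t => (hg _).hasFDerivAt.comp_hasDerivAt t (euclideanSnocEquiv.hasDerivAt_slice x t))
    (fun t => ?_) hx2 hxg' _ hq
  simpa [PiLp.norm_single] using
    (fderiv ℝ g _).le_opNorm (EuclideanSpace.single (Fin.last d) (1 : ℝ))

theorem integral_thickening_lastCoordGraph_sq_le {M : NNReal}
    {h : EuclideanSpace ℝ (Fin d) → ℝ} (hh : LipschitzWith M h) {δ : ℝ} (hδ : 0 ≤ δ)
    {g : EuclideanSpace ℝ (Fin (d + 1)) → ℝ} (hg : Differentiable ℝ g) (hg2 : MemLp g 2 volume)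
    (hg' : MemLp (fun x => ‖fderiv ℝ g x‖) 2 volume) :
    ∫ x in thickening δ (lastCoordGraph h), g x ^ 2 ≤
      2 * √(1 + (M : ℝ) ^ 2) * δ * √(∫ x, g x ^ 2) * √(∫ x, ‖fderiv ℝ g x‖ ^ 2) := by
  have hgg' : Integrable fun p => |g p| * ‖fderiv ℝ g p‖ := by
    simpa [abs_mul] using (hg2.integrable_mul hg').abs
  calc ∫ x in thickening δ (lastCoordGraph h), g x ^ 2
      ≤ ∫ x in lastCoordSlab h (√(1 + (M : ℝ) ^ 2) * δ), g x ^ 2 :=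
        setIntegral_mono_set hg2.integrable_sq.integrableOn
          (Eventually.of_forall fun _ => sq_nonneg _)
          (thickening_lastCoordGraph_subset hh δ).eventuallyLE
    _ ≤ 2 * (√(1 + (M : ℝ) ^ 2) * δ) * ∫ p, |g p| * ‖fderiv ℝ g p‖ :=
        integral_lastCoordSlab_sq_le hh.continuous.measurable (by positivity) hg
          hg2.integrable_sq hgg'
    _ ≤ 2 * (√(1 + (M : ℝ) ^ 2) * δ) * (√(∫ x, g x ^ 2) * √(∫ x, ‖fderiv ℝ g x‖ ^ 2)) := by
        gcongr
        simpa using integral_abs_mul_le_sqrt_mul_sqrt hg2 hg'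
    _ = _ := by ring

end Graph

/-- The graph `E = {(x, h(x)) : x ∈ ℝ^{d-1}}` of a Lipschitz function `h` (with
Lipschitz constant `M`) is `H¹`-thin in `ℝ^d`; moreover, with `N = √(1+M²)`, one has
`∫_{E_δ} g² ≤ 2Nδ‖g‖_{L²}‖∇g‖_{L²}` for all `g ∈ H¹(ℝ^d)` and all `δ > 0`. -/
theorem stmt_14 (d : ℕ) (M : NNReal) (h : EuclideanSpace ℝ (Fin d) → ℝ)
    (hLip : LipschitzWith M h) :
    (∀ δ : ℝ, 0 < δ →
      ∀ g : EuclideanSpace ℝ (Fin (d + 1)) → ℝ, Differentiable ℝ g →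
        MemLp g 2 volume → MemLp (fun x => ‖fderiv ℝ g x‖) 2 volume →
        ∫ x in Metric.thickening δ
            {p : EuclideanSpace ℝ (Fin (d + 1)) |
              p (Fin.last d) = h (WithLp.toLp 2 (Fin.init (p : Fin (d + 1) → ℝ) : Fin d → ℝ) :
                EuclideanSpace ℝ (Fin d))}, (g x) ^ 2 ≤
          2 * Real.sqrt (1 + (M : ℝ) ^ 2) * δ * Real.sqrt (∫ x, (g x) ^ 2) *
            Real.sqrt (∫ x, ‖fderiv ℝ g x‖ ^ 2)) ∧
    (∃ C > (0 : ℝ), ∃ δ₀ > (0 : ℝ), ∀ δ ∈ Set.Ioo (0 : ℝ) δ₀,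
      ∀ g : EuclideanSpace ℝ (Fin (d + 1)) → ℝ, Differentiable ℝ g →
        MemLp g 2 volume → MemLp (fun x => ‖fderiv ℝ g x‖) 2 volume →
        ∫ x in Metric.thickening δ
            {p : EuclideanSpace ℝ (Fin (d + 1)) |
              p (Fin.last d) = h (WithLp.toLp 2 (Fin.init (p : Fin (d + 1) → ℝ) : Fin d → ℝ) :
                EuclideanSpace ℝ (Fin d))}, (g x) ^ 2 ≤
          (1 / 2) * (∫ x, (g x) ^ 2) + C * δ ^ 2 * ∫ x, ‖fderiv ℝ g x‖ ^ 2) := by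
  refine ⟨fun δ hδ g hg hg2 hg' =>
    integral_thickening_lastCoordGraph_sq_le hLip hδ.le hg hg2 hg', 2 * (1 + (M : ℝ) ^ 2),
    by positivity, 1, one_pos, fun δ hδ g hg hg2 hg' => ?_⟩
  refine (integral_thickening_lastCoordGraph_sq_le hLip hδ.1.le hg hg2 hg').trans ?_
  set A := ∫ x, g x ^ 2
  set B := ∫ x, ‖fderiv ℝ g x‖ ^ 2
  set N := √(1 + (M : ℝ) ^ 2)
  have h_amgm : 2 * N * δ * √A * √B ≤ 1 / 2 * √A ^ 2 + 2 * N ^ 2 * δ ^ 2 * √B ^ 2 := by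
    nlinarith [sq_nonneg (√A - 2 * N * δ * √B)]
  rwa [Real.sq_sqrt (integral_nonneg fun x => sq_nonneg _),
    Real.sq_sqrt (integral_nonneg fun x => sq_nonneg _), Real.sq_sqrt (by positivity)] at h_amgm
end

section
/- Let v(x) = |x|² on ℝ^d (d ≥ 2). For every λ ∈ ℝ, δ > 0, and g ∈ H¹(ℝ^d): ∫_{E²_{λ,δ}} g² dx ≤ 2√2 δ ‖g‖_{L²}‖∇g‖_{L²} and ∫_{ℰ²_{λ,δ}} g² dx ≤ 2(1+√3) δ ‖g‖_{L²}‖∇g‖_{L²}, where E²_{λ,δ} = {x : ||x|² − λ| < δ²} and ℰ²_{λ,δ} is its open δ-neighborhood. -/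
/-!
Along the ray `s ↦ s • x`, `s ≥ 1`, the function `g (s • x) ^ 2` is integrable for almost every
`x`, since integrating it over `x` gives `∫₁^∞ s⁻ᵈ ds · ‖g‖²` with `d ≥ 2`; hence it vanishes at
infinity and `g x ^ 2 ≤ 2 ∫₁^∞ |g (s • x)| ‖∇g (s • x)‖ ‖x‖ ds`. Integrating over the annulus
`a ≤ ‖x‖ ≤ b` and substituting `y = s • x` leaves for each `y` the weight `∫ s⁻ᵈ ‖y‖ / s ds` over
the `s ≥ 1` with `‖y‖ / s ∈ [a, b]`, which the substitution `t = ‖y‖ / s` bounds by `b - a`;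
Cauchy–Schwarz then gives `∫_{a ≤ ‖x‖ ≤ b} g² ≤ 2 (b - a) ‖g‖ ‖∇g‖`. The set `E²_{λ,δ}` lies in
the annulus `√(λ - δ²) ≤ ‖x‖ ≤ √(λ + δ²)`, of width at most `√2 δ`, and its `δ`-thickening in an
annulus of width at most `(1 + √3) δ`.
-/

open MeasureTheory Metric Set Filter Topology ENNReal Module

theorem abs_le_integral_Ioi_abs_of_hasDerivAt {f f' : ℝ → ℝ} {a : ℝ}
    (hderiv : ∀ x ∈ Ici a, HasDerivAt f (f' x) x) (hf' : IntegrableOn f' (Ioi a))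
    (hf : IntegrableOn f (Ioi a)) :
    |f a| ≤ ∫ x in Ioi a, |f' x| := by
  have hlim : Tendsto f atTop (𝓝 0) :=
    tendsto_zero_of_hasDerivAt_of_integrableOn_Ioi (fun x hx => hderiv x hx.out.le) hf' hf
  have hftc := integral_Ioi_of_hasDerivAt_of_tendsto' hderiv hf' hlim
  rw [zero_sub] at hftc
  calc |f a| = |∫ x in Ioi a, f' x| := by rw [hftc, abs_neg]
    _ ≤ ∫ x in Ioi a, |f' x| := abs_integral_le_integral_abs

theorem lintegral_Ioi_inter_div_mem_Icc_le (r a b : ℝ) :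
    ∫⁻ s in Ioi 0 ∩ {s | r / s ∈ Icc a b}, ENNReal.ofReal (r / s ^ 2) ≤
      ENNReal.ofReal (b - a) := by
  set S := Ioi (0 : ℝ) ∩ {s | r / s ∈ Icc a b}
  rcases le_or_gt r 0 with hr | hr
  · have h0 : ∀ s, ENNReal.ofReal (r / s ^ 2) = 0 := fun s =>
      ENNReal.ofReal_eq_zero.2 (div_nonpos_of_nonpos_of_nonneg hr (sq_nonneg s))
    simp [h0]
  have hS : MeasurableSet S :=
    measurableSet_Ioi.inter (measurableSet_Icc.preimage (measurable_const.div measurable_id))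
  have hderiv : ∀ s ∈ S, HasDerivWithinAt (fun s => r / s) (-(r / s ^ 2)) S s := fun s hs => by
    simpa only [div_eq_mul_inv, mul_neg] using
      ((hasDerivAt_inv hs.1.out.ne').const_mul r).hasDerivWithinAt
  have hinj : InjOn (fun s => r / s) S := fun s _ t _ hst =>
    inv_injective (mul_left_cancel₀ hr.ne' hst)
  calc ∫⁻ s in S, ENNReal.ofReal (r / s ^ 2)
      = ∫⁻ s in S, ENNReal.ofReal |-(r / s ^ 2)| * 1 := by
        refine setLIntegral_congr_fun hS fun s hs => ?_
        rw [abs_neg, abs_of_pos (by have := hs.1.out; positivity), mul_one]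
    _ = volume ((fun s => r / s) '' S) := by
        rw [← setLIntegral_one]
        exact (lintegral_image_eq_lintegral_abs_deriv_mul hS hderiv hinj fun _ => 1).symm
    _ ≤ volume (Icc a b) := measure_mono (image_subset_iff.2 fun s hs => hs.2)
    _ = ENNReal.ofReal (b - a) := Real.volume_Icc

theorem lintegral_Ioi_one_inv_pow_ne_top {d : ℕ} (hd : 2 ≤ d) :
    ∫⁻ s in Ioi (1 : ℝ), ENNReal.ofReal (s ^ d)⁻¹ ≠ ∞ := by
  have hint := integrableOn_Ioi_rpow_of_lt (a := -(d : ℝ)) (by norm_cast; omega) one_pos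
  refine ((setLIntegral_congr_fun measurableSet_Ioi fun s (hs : 1 < s) => ?_).trans_lt
    hint.lintegral_lt_top).ne
  rw [Real.rpow_neg (by linarith), Real.rpow_natCast]

theorem integral_norm_mul_norm_le_sqrt_mul_sqrt {α F : Type*} [MeasurableSpace α]
    {μ : Measure α} [NormedAddCommGroup F] {f g : α → F}
    (hf : MemLp f 2 μ) (hg : MemLp g 2 μ) :
    ∫ x, ‖f x‖ * ‖g x‖ ∂μ ≤ √(∫ x, ‖f x‖ ^ 2 ∂μ) * √(∫ x, ‖g x‖ ^ 2 ∂μ) := by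
  rw [← ENNReal.ofReal_ofNat] at hf hg
  have h := integral_mul_norm_le_Lp_mul_Lq Real.HolderConjugate.two_two hf hg
  simpa only [Real.rpow_two, Real.sqrt_eq_rpow, one_div] using h

section Annulus

variable {E : Type*} [NormedAddCommGroup E]

theorem setOf_abs_norm_sq_sub_lt_subset (lam δ : ℝ) :
    {x : E | |‖x‖ ^ 2 - lam| < δ ^ 2} ⊆ norm ⁻¹' Icc √(lam - δ ^ 2) √(lam + δ ^ 2) := by
  intro x hx
  obtain ⟨hlo, hhi⟩ := abs_lt.1 hx.out
  rw [mem_preimage, ← Real.sqrt_sq (norm_nonneg x)]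
  exact ⟨Real.sqrt_le_sqrt (by linarith), Real.sqrt_le_sqrt (by linarith)⟩

theorem thickening_preimage_norm_Icc_subset (δ a b : ℝ) :
    thickening δ (norm ⁻¹' Icc a b : Set E) ⊆ norm ⁻¹' Icc (max (a - δ) 0) (b + δ) := by
  intro x hx
  obtain ⟨z, ⟨hza, hzb⟩, hxz⟩ := mem_thickening_iff.1 hx
  have := abs_le.1 ((abs_norm_sub_norm_le x z).trans (dist_eq_norm x z ▸ hxz.le))
  exact ⟨max_le (by linarith) (norm_nonneg x), by linarith⟩

theorem sqrt_add_sq_sub_sqrt_sub_sq_le (lam : ℝ) {δ : ℝ} (hδ : 0 ≤ δ) :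
    √(lam + δ ^ 2) - √(lam - δ ^ 2) ≤ √2 * δ := by
  set p := √(lam + δ ^ 2)
  set q := √(lam - δ ^ 2)
  have hqp : q ≤ p := Real.sqrt_le_sqrt (by nlinarith)
  have hq : 0 ≤ q := Real.sqrt_nonneg _
  have hdiff : p ^ 2 - q ^ 2 ≤ 2 * δ ^ 2 := by
    simp only [p, q, Real.sq_sqrt']
    have := sq_nonneg δ
    rcases le_total (lam - δ ^ 2) 0 with h | h
    · rw [max_eq_right h, sub_zero]
      exact max_le (by linarith) (by linarith)
    · rw [max_eq_left h, max_eq_left (by linarith)]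
      linarith
  have hsq : (p - q) ^ 2 ≤ (√2 * δ) ^ 2 := by
    rw [mul_pow, Real.sq_sqrt zero_le_two]
    nlinarith
  exact abs_le_of_sq_le_sq' hsq (by positivity) |>.2

theorem sqrt_add_sq_add_sub_max_le (lam : ℝ) {δ : ℝ} (hδ : 0 ≤ δ) :
    √(lam + δ ^ 2) + δ - max (√(lam - δ ^ 2) - δ) 0 ≤ (1 + √3) * δ := by
  set p := √(lam + δ ^ 2)
  set q := √(lam - δ ^ 2)
  have h3 : √3 ^ 2 = 3 := Real.sq_sqrt (by norm_num)
  have h3' : 1 ≤ √3 := by rw [Real.one_le_sqrt]; norm_num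
  rcases le_total lam (2 * δ ^ 2) with h | h
  · have hp : p ≤ √3 * δ := by
      rw [show √3 * δ = √((√3 * δ) ^ 2) by rw [Real.sqrt_sq (by positivity)]]
      exact Real.sqrt_le_sqrt (by nlinarith)
    have := le_max_right (q - δ) 0
    linarith
  · have hp : √3 * δ ≤ p := by
      rw [show √3 * δ = √((√3 * δ) ^ 2) by rw [Real.sqrt_sq (by positivity)]]
      exact Real.sqrt_le_sqrt (by nlinarith)
    have hq : δ ≤ q := by
      rw [show δ = √(δ ^ 2) by rw [Real.sqrt_sq hδ]]
      exact Real.sqrt_le_sqrt (by nlinarith)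
    have hqp : q ≤ p := Real.sqrt_le_sqrt (by nlinarith)
    have hprod : (p - q) * (p + q) = 2 * δ ^ 2 := by
      rw [show (p - q) * (p + q) = p ^ 2 - q ^ 2 by ring, Real.sq_sqrt (by nlinarith),
        Real.sq_sqrt (by nlinarith)]
      ring
    rw [max_eq_left (by linarith)]
    rcases hδ.eq_or_lt with rfl | hδ0
    · simp [p, q]
    have key : 0 ≤ (√3 + 1) * δ * ((√3 - 1) * δ - (p - q)) := by
      have : (√3 + 1) * δ * ((√3 - 1) * δ - (p - q)) = (p - q) * (p + q - (√3 + 1) * δ) := by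
        linear_combination δ ^ 2 * h3 - hprod
      rw [this]
      exact mul_nonneg (sub_nonneg.2 hqp) (by linarith)
    have := (mul_nonneg_iff_of_pos_left (by positivity)).1 key
    linarith

variable [NormedSpace ℝ E]

theorem lintegral_Ioi_one_inv_pow_mul_indicator_le {d : ℕ} (hd : 1 ≤ d) (a b : ℝ) (y : E) :
    ∫⁻ s in Ioi (1 : ℝ), ENNReal.ofReal (s ^ d)⁻¹ *
        (norm ⁻¹' Icc a b).indicator (fun x => ENNReal.ofReal ‖x‖) (s⁻¹ • y) ≤
      ENNReal.ofReal (b - a) := by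
  set T := Ioi (0 : ℝ) ∩ {s | ‖y‖ / s ∈ Icc a b}
  have hT : MeasurableSet T :=
    measurableSet_Ioi.inter (measurableSet_Icc.preimage (measurable_const.div measurable_id))
  have hpt : ∀ s ∈ Ioi (1 : ℝ), ENNReal.ofReal (s ^ d)⁻¹ *
      (norm ⁻¹' Icc a b).indicator (fun x => ENNReal.ofReal ‖x‖) (s⁻¹ • y) ≤
        T.indicator (fun s => ENNReal.ofReal (‖y‖ / s ^ 2)) s := by
    intro s (hs : 1 < s)
    have hs0 : 0 < s := one_pos.trans hs
    have hnorm : ‖s⁻¹ • y‖ = ‖y‖ / s := by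
      rw [norm_smul, norm_inv, Real.norm_of_nonneg hs0.le, inv_mul_eq_div]
    by_cases hy : ‖y‖ / s ∈ Icc a b
    · rw [indicator_of_mem (show s⁻¹ • y ∈ norm ⁻¹' Icc a b by rwa [mem_preimage, hnorm]),
        indicator_of_mem (show s ∈ T from ⟨hs0, hy⟩), hnorm, ← ENNReal.ofReal_mul (by positivity)]
      refine ENNReal.ofReal_le_ofReal ?_
      calc (s ^ d)⁻¹ * (‖y‖ / s) ≤ s⁻¹ * (‖y‖ / s) := by
            gcongr
            exact le_self_pow₀ hs.le (by omega)
        _ = ‖y‖ / s ^ 2 := by field_simp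
    · rw [indicator_of_notMem (show s⁻¹ • y ∉ norm ⁻¹' Icc a b by rwa [mem_preimage, hnorm]),
        mul_zero]
      exact bot_le
  calc _ ≤ ∫⁻ s in Ioi (1 : ℝ), T.indicator (fun s => ENNReal.ofReal (‖y‖ / s ^ 2)) s :=
        setLIntegral_mono' measurableSet_Ioi hpt
    _ ≤ ∫⁻ s, T.indicator (fun s => ENNReal.ofReal (‖y‖ / s ^ 2)) s :=
        setLIntegral_le_lintegral _ _
    _ = ∫⁻ s in T, ENNReal.ofReal (‖y‖ / s ^ 2) := lintegral_indicator hT _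
    _ ≤ ENNReal.ofReal (b - a) := lintegral_Ioi_inter_div_mem_Icc_le _ _ _

variable [MeasurableSpace E] [BorelSpace E]

theorem sq_le_two_mul_integral_Ioi_one_smul {g : E → ℝ} (hg : Differentiable ℝ g) (x : E)
    (hsq : IntegrableOn (fun s => g (s • x) ^ 2) (Ioi (1 : ℝ)))
    (hgrad : IntegrableOn (fun s => ‖x‖ * (|g (s • x)| * ‖fderiv ℝ g (s • x)‖)) (Ioi (1 : ℝ))) :
    g x ^ 2 ≤ 2 * ∫ s in Ioi (1 : ℝ), ‖x‖ * (|g (s • x)| * ‖fderiv ℝ g (s • x)‖) := by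
  set F' : ℝ → ℝ := fun s => 2 * g (s • x) * fderiv ℝ g (s • x) x
  have hFderiv : ∀ s, HasDerivAt (fun s => g (s • x) ^ 2) (F' s) s := by
    intro s
    have h := (hg (s • x)).hasFDerivAt.comp_hasDerivAt s ((hasDerivAt_id s).smul_const x)
    rw [one_smul] at h
    exact (h.fun_pow 2).congr_deriv (by simp only [F', Function.comp_apply, id]; ring)
  have hF'le : ∀ s, |F' s| ≤ 2 * (‖x‖ * (|g (s • x)| * ‖fderiv ℝ g (s • x)‖)) := by
    intro s
    calc |F' s| = 2 * |g (s • x)| * |fderiv ℝ g (s • x) x| := by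
          simp only [F', abs_mul, abs_two]
      _ ≤ 2 * |g (s • x)| * (‖fderiv ℝ g (s • x)‖ * ‖x‖) := by
          gcongr; exact (fderiv ℝ g (s • x)).le_opNorm x
      _ = _ := by ring
  have hF'int : IntegrableOn F' (Ioi (1 : ℝ)) := by
    refine (hgrad.const_mul 2).mono' ?_
      (ae_of_all _ fun s => (Real.norm_eq_abs _).trans_le (hF'le s))
    have hDg := (measurable_fderiv_apply_const ℝ g x).comp ((measurable_id (α := ℝ)).smul_const x)
    have hgm := hg.continuous.measurable
    fun_prop
  calc g x ^ 2 = |g ((1 : ℝ) • x) ^ 2| := by simp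
    _ ≤ ∫ s in Ioi (1 : ℝ), |F' s| :=
        abs_le_integral_Ioi_abs_of_hasDerivAt (fun s _ => hFderiv s) hF'int hsq
    _ ≤ ∫ s in Ioi (1 : ℝ), 2 * (‖x‖ * (|g (s • x)| * ‖fderiv ℝ g (s • x)‖)) :=
        setIntegral_mono hF'int.abs (hgrad.const_mul 2) hF'le
    _ = _ := integral_const_mul 2 _

theorem ofReal_sq_le_two_mul_lintegral_Ioi_one_smul {g : E → ℝ} (hg : Differentiable ℝ g)
    (x : E) (hfin : ∫⁻ s in Ioi (1 : ℝ), ENNReal.ofReal (g (s • x) ^ 2) ≠ ∞) :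
    ENNReal.ofReal (g x ^ 2) ≤
      2 * ∫⁻ s in Ioi (1 : ℝ), ENNReal.ofReal ‖x‖ *
        ENNReal.ofReal (|g (s • x)| * ‖fderiv ℝ g (s • x)‖) := by
  simp_rw [← ENNReal.ofReal_mul (norm_nonneg x)]
  set φ : ℝ → ℝ := fun s => ‖x‖ * (|g (s • x)| * ‖fderiv ℝ g (s • x)‖)
  by_cases htop : ∫⁻ s in Ioi (1 : ℝ), ENNReal.ofReal (φ s) = ∞
  · rw [htop, ENNReal.mul_top two_ne_zero]
    exact le_top
  have hgc := hg.continuous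
  have hgm := hgc.measurable
  have hφint : IntegrableOn φ (Ioi (1 : ℝ)) :=
    ⟨by fun_prop, (hasFiniteIntegral_iff_ofReal (ae_of_all _ fun s => by positivity)).2
      (lt_top_iff_ne_top.2 htop)⟩
  have hsq : IntegrableOn (fun s => g (s • x) ^ 2) (Ioi (1 : ℝ)) :=
    ⟨by fun_prop, (hasFiniteIntegral_iff_ofReal (ae_of_all _ fun s => sq_nonneg _)).2
      (lt_top_iff_ne_top.2 hfin)⟩
  calc ENNReal.ofReal (g x ^ 2) ≤ ENNReal.ofReal (2 * ∫ s in Ioi (1 : ℝ), φ s) :=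
        ENNReal.ofReal_le_ofReal (sq_le_two_mul_integral_Ioi_one_smul hg x hsq hφint)
    _ = 2 * ∫⁻ s in Ioi (1 : ℝ), ENNReal.ofReal (φ s) := by
      rw [ENNReal.ofReal_mul zero_le_two, ofReal_integral_eq_lintegral_ofReal hφint
        (ae_of_all _ fun s => by positivity), ENNReal.ofReal_ofNat]

variable [FiniteDimensional ℝ E] (μ : Measure E) [μ.IsAddHaarMeasure]

theorem lintegral_comp_smul_of_pos {f : E → ℝ≥0∞} (hf : Measurable f) {s : ℝ} (hs : 0 < s) :
    ∫⁻ x, f (s • x) ∂μ = ENNReal.ofReal (s ^ finrank ℝ E)⁻¹ * ∫⁻ x, f x ∂μ := by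
  rw [← lintegral_map hf (measurable_const_smul s), Measure.map_addHaar_smul μ hs.ne',
    lintegral_smul_measure, abs_of_pos (by positivity), smul_eq_mul]

theorem ae_lintegral_Ioi_one_comp_smul_ne_top (hd : 2 ≤ finrank ℝ E) {f : E → ℝ≥0∞}
    (hf : Measurable f) (hfin : ∫⁻ x, f x ∂μ ≠ ∞) :
    ∀ᵐ x ∂μ, ∫⁻ s in Ioi (1 : ℝ), f (s • x) ≠ ∞ := by
  have hF : Measurable (Function.uncurry fun (x : E) (s : ℝ) => f (s • x)) :=
    hf.comp (measurable_snd.smul measurable_fst)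
  refine (ae_lt_top hF.lintegral_prod_right' ?_).mono fun x hx => hx.ne
  simp only [Function.uncurry_apply_pair]
  rw [lintegral_lintegral_swap hF.aemeasurable,
    setLIntegral_congr_fun measurableSet_Ioi fun s (hs : 1 < s) =>
      lintegral_comp_smul_of_pos μ hf (one_pos.trans hs),
    lintegral_mul_const' _ _ hfin]
  exact mul_ne_top (lintegral_Ioi_one_inv_pow_ne_top hd) hfin

theorem lintegral_lintegral_Ioi_one_mul_comp_smul {w G : E → ℝ≥0∞} (hw : Measurable w)
    (hG : Measurable G) :
    ∫⁻ x, (∫⁻ s in Ioi (1 : ℝ), w x * G (s • x)) ∂μ =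
      ∫⁻ y, G y * (∫⁻ s in Ioi (1 : ℝ), ENNReal.ofReal (s ^ finrank ℝ E)⁻¹ * w (s⁻¹ • y)) ∂μ := by
  have hswap₁ : Measurable (Function.uncurry fun (x : E) (s : ℝ) => w x * G (s • x)) :=
    (hw.comp measurable_fst).mul (hG.comp (measurable_snd.smul measurable_fst))
  have hswap₂ : Measurable (Function.uncurry fun (s : ℝ) (y : E) =>
      ENNReal.ofReal (s ^ finrank ℝ E)⁻¹ * (w (s⁻¹ • y) * G y)) := by
    have : Measurable fun p : ℝ × E => p.1⁻¹ • p.2 := measurable_fst.inv.smul measurable_snd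
    exact (by fun_prop : Measurable fun p : ℝ × E => ENNReal.ofReal (p.1 ^ finrank ℝ E)⁻¹).mul
      ((hw.comp this).mul (hG.comp measurable_snd))
  calc ∫⁻ x, (∫⁻ s in Ioi (1 : ℝ), w x * G (s • x)) ∂μ
      = ∫⁻ s in Ioi (1 : ℝ), (∫⁻ x, w x * G (s • x) ∂μ) :=
        lintegral_lintegral_swap hswap₁.aemeasurable
    _ = ∫⁻ s in Ioi (1 : ℝ), ENNReal.ofReal (s ^ finrank ℝ E)⁻¹ *
          (∫⁻ y, w (s⁻¹ • y) * G y ∂μ) := by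
        refine setLIntegral_congr_fun measurableSet_Ioi fun s (hs : 1 < s) => ?_
        have hs0 : 0 < s := one_pos.trans hs
        simpa only [inv_smul_smul₀ hs0.ne'] using lintegral_comp_smul_of_pos μ
          (f := fun y => w (s⁻¹ • y) * G y) ((hw.comp (measurable_const_smul s⁻¹)).mul hG) hs0
    _ = _ := by
        simp_rw [← lintegral_const_mul' _ _ ofReal_ne_top]
        rw [lintegral_lintegral_swap hswap₂.aemeasurable]
        refine lintegral_congr fun y => ?_
        have hws : Measurable fun s : ℝ => ENNReal.ofReal (s ^ finrank ℝ E)⁻¹ * w (s⁻¹ • y) :=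
          (by fun_prop : Measurable fun s : ℝ => ENNReal.ofReal (s ^ finrank ℝ E)⁻¹).mul
            (hw.comp (measurable_inv.smul_const y))
        rw [← lintegral_const_mul _ hws]
        exact lintegral_congr fun s => by ring

theorem lintegral_preimage_norm_Icc_sq_le (hd : 2 ≤ finrank ℝ E) {g : E → ℝ}
    (hg : Differentiable ℝ g) (hfin : ∫⁻ x, ENNReal.ofReal (g x ^ 2) ∂μ ≠ ∞) (a b : ℝ) :
    ∫⁻ x in norm ⁻¹' Icc a b, ENNReal.ofReal (g x ^ 2) ∂μ ≤
      2 * ENNReal.ofReal (b - a) * ∫⁻ y, ENNReal.ofReal (|g y| * ‖fderiv ℝ g y‖) ∂μ := by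
  set A : Set E := norm ⁻¹' Icc a b
  set w : E → ℝ≥0∞ := A.indicator fun x => ENNReal.ofReal ‖x‖
  set G : E → ℝ≥0∞ := fun y => ENNReal.ofReal (|g y| * ‖fderiv ℝ g y‖)
  have hA : MeasurableSet A := measurableSet_Icc.preimage measurable_norm
  have hgm := hg.continuous.measurable
  have hG : Measurable G := by fun_prop
  have hray : ∀ᵐ x ∂μ, ENNReal.ofReal (g x ^ 2) ≤
      2 * ∫⁻ s in Ioi (1 : ℝ), ENNReal.ofReal ‖x‖ * G (s • x) := by
    filter_upwards [ae_lintegral_Ioi_one_comp_smul_ne_top μ hd (by fun_prop) hfin] with x hx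
    exact ofReal_sq_le_two_mul_lintegral_Ioi_one_smul hg x hx
  calc ∫⁻ x in A, ENNReal.ofReal (g x ^ 2) ∂μ
      ≤ ∫⁻ x in A, 2 * (∫⁻ s in Ioi (1 : ℝ), ENNReal.ofReal ‖x‖ * G (s • x)) ∂μ :=
        lintegral_mono_ae (ae_restrict_of_ae hray)
    _ = 2 * ∫⁻ x, (∫⁻ s in Ioi (1 : ℝ), w x * G (s • x)) ∂μ := by
        rw [lintegral_const_mul' _ _ ofNat_ne_top, ← lintegral_indicator hA]
        congr 1
        refine lintegral_congr fun x => ?_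
        by_cases hx : x ∈ A <;> simp [w, hx]
    _ = 2 * ∫⁻ y, G y * (∫⁻ s in Ioi (1 : ℝ), ENNReal.ofReal (s ^ finrank ℝ E)⁻¹ *
          w (s⁻¹ • y)) ∂μ := by
        rw [lintegral_lintegral_Ioi_one_mul_comp_smul μ
          ((by fun_prop : Measurable fun x : E => ENNReal.ofReal ‖x‖).indicator hA) hG]
    _ ≤ 2 * ∫⁻ y, G y * ENNReal.ofReal (b - a) ∂μ := by
        gcongr with y
        exact lintegral_Ioi_one_inv_pow_mul_indicator_le (by omega) a b y
    _ = 2 * ENNReal.ofReal (b - a) * ∫⁻ y, G y ∂μ := by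
        rw [lintegral_mul_const _ hG, mul_assoc, mul_comm (ENNReal.ofReal _)]

theorem setIntegral_sq_le_of_subset_preimage_norm_Icc (hd : 2 ≤ finrank ℝ E) {g : E → ℝ}
    (hg : Differentiable ℝ g) (hg2 : MemLp g 2 μ)
    (hg'2 : MemLp (fun x => ‖fderiv ℝ g x‖) 2 μ) {S : Set E} {a b w : ℝ}
    (hS : S ⊆ norm ⁻¹' Icc a b) (hab : a ≤ b) (hw : b - a ≤ w) :
    ∫ x in S, g x ^ 2 ∂μ ≤ 2 * w * √(∫ x, g x ^ 2 ∂μ) * √(∫ x, ‖fderiv ℝ g x‖ ^ 2 ∂μ) := by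
  have hint : Integrable (fun x => |g x| * ‖fderiv ℝ g x‖) μ := by
    exact hg2.norm.integrable_mul hg'2
  have hCS : ∫ x, |g x| * ‖fderiv ℝ g x‖ ∂μ ≤
      √(∫ x, g x ^ 2 ∂μ) * √(∫ x, ‖fderiv ℝ g x‖ ^ 2 ∂μ) := by
    simpa only [Real.norm_eq_abs, sq_abs, abs_norm] using
      integral_norm_mul_norm_le_sqrt_mul_sqrt hg2 hg'2
  have hlint := lintegral_preimage_norm_Icc_sq_le μ hd hg hg2.integrable_sq.lintegral_lt_top.ne a b
  rw [← ofReal_integral_eq_lintegral_ofReal hint (ae_of_all _ fun x => by positivity),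
    ← ENNReal.ofReal_ofNat, ← ENNReal.ofReal_mul zero_le_two, ← ENNReal.ofReal_mul (by linarith)]
    at hlint
  calc ∫ x in S, g x ^ 2 ∂μ ≤ ∫ x in norm ⁻¹' Icc a b, g x ^ 2 ∂μ :=
        setIntegral_mono_set hg2.integrable_sq.integrableOn (ae_of_all _ fun x => sq_nonneg _)
          hS.eventuallyLE
    _ ≤ 2 * (b - a) * ∫ x, |g x| * ‖fderiv ℝ g x‖ ∂μ := by
        rw [integral_eq_lintegral_of_nonneg_ae (ae_of_all _ fun x => sq_nonneg _)
          (hg.continuous.pow 2).aestronglyMeasurable]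
        exact ENNReal.toReal_le_of_le_ofReal
          (mul_nonneg (by linarith) (integral_nonneg fun x => by positivity)) hlint
    _ ≤ 2 * w * (√(∫ x, g x ^ 2 ∂μ) * √(∫ x, ‖fderiv ℝ g x‖ ^ 2 ∂μ)) := by
        gcongr
        linarith
    _ = _ := by ring

end Annulus

/-- For `v(x) = |x|²` on `ℝ^d` (`d ≥ 2`), for every `λ ∈ ℝ`, `δ > 0` and `g ∈ H¹(ℝ^d)`,
`∫_{E²_{λ,δ}} g² ≤ 2√2 δ ‖g‖‖∇g‖` and `∫_{ℰ²_{λ,δ}} g² ≤ 2(1+√3) δ ‖g‖‖∇g‖`,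
where `E²_{λ,δ} = {x : ||x|² - λ| < δ²}` and `ℰ²_{λ,δ}` is its open `δ`-neighborhood. -/
theorem stmt_16 (d : ℕ) (hd : 2 ≤ d) (lam δ : ℝ) (hδ : 0 < δ)
    (g : EuclideanSpace ℝ (Fin d) → ℝ)
    (hgdiff : Differentiable ℝ g) (hg2 : MemLp g 2 volume)
    (hg'2 : MemLp (fun x => ‖fderiv ℝ g x‖) 2 volume) :
    (∫ x in {x : EuclideanSpace ℝ (Fin d) | |‖x‖ ^ 2 - lam| < δ ^ 2}, (g x) ^ 2 ≤
        2 * Real.sqrt 2 * δ * Real.sqrt (∫ x, (g x) ^ 2) *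
          Real.sqrt (∫ x, ‖fderiv ℝ g x‖ ^ 2)) ∧
      (∫ x in Metric.thickening δ {x : EuclideanSpace ℝ (Fin d) | |‖x‖ ^ 2 - lam| < δ ^ 2},
          (g x) ^ 2 ≤
        2 * (1 + Real.sqrt 3) * δ * Real.sqrt (∫ x, (g x) ^ 2) *
          Real.sqrt (∫ x, ‖fderiv ℝ g x‖ ^ 2)) := by
  have hdim : 2 ≤ finrank ℝ (EuclideanSpace ℝ (Fin d)) := by rwa [finrank_euclideanSpace_fin]
  have hE := setOf_abs_norm_sq_sub_lt_subset (E := EuclideanSpace ℝ (Fin d)) lam δ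
  have hab : √(lam - δ ^ 2) ≤ √(lam + δ ^ 2) := Real.sqrt_le_sqrt (by nlinarith)
  refine ⟨?_, ?_⟩
  · simpa only [mul_assoc] using setIntegral_sq_le_of_subset_preimage_norm_Icc volume hdim
      hgdiff hg2 hg'2 hE hab (sqrt_add_sq_sub_sqrt_sub_sq_le lam hδ.le)
  · simpa only [mul_assoc] using setIntegral_sq_le_of_subset_preimage_norm_Icc volume hdim
      hgdiff hg2 hg'2
      ((thickening_subset_of_subset δ hE).trans (thickening_preimage_norm_Icc_subset δ _ _))
      (max_le (by linarith) (by positivity)) (sqrt_add_sq_add_sub_max_le lam hδ.le)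
end
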